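/- arXiv:2306.05726 — 7 statements merged into one kernel-verified Lean document; each statement's English description precedes it below -/
import Mathlib

section
/- Let A be a finite nonempty type, let τ > 0, let q : A → ℝ, and let π̄ be a probability vector on A. Let Z = ∑_b π̄ b * Real.exp (q b / τ) and define g : A → ℝ by g a = π̄ a * Real.exp (q a / τ) / Z. If π is a probability vector on A whose support is contained in the support of π̄ and ∑_a π a * q a − τ * KL(π‖π̄) = τ * Real.log Z, then π = g. (Uniqueness of the maximizer of the KL-regularized objective: the Gibbs distribution g is the unique optimal policy of the conservative policy optimization problem in the paper's equation (5).) -/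
/-- KL divergence of probability vectors on a finite type, summed over the support of `π`. -/
noncomputable def KL {A : Type*} [Fintype A] (π πbar : A → ℝ) : ℝ :=
  ∑ a ∈ Finset.univ.filter (fun a => π a ≠ 0), π a * Real.log (π a / πbar a)

/-!
Dividing `π̄ a * exp (q a / τ)` by `Z` shifts `log (π a / π̄ a)` by `-q a / τ + log Z`, so
`τ * KL(π‖g) = τ * KL(π‖π̄) - ∑ π q + τ log Z`, and the optimality hypothesis says exactly that
`KL(π‖g) = 0`. Gibbs' inequality in its termwise form `x log (x / y) ≥ x - y`, with equality only
at `x = y`, then forces `π = g`.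
-/

open Finset InformationTheory
open Real (log exp exp_pos log_div log_mul log_exp)

section Gibbs

lemma mul_log_div_add_sub_eq_mul_klFun (x : ℝ) {y : ℝ} (hy : y ≠ 0) :
    x * log (x / y) + y - x = y * klFun (x / y) := by
  rw [klFun_apply]
  field_simp

variable {x y : ℝ}

lemma mul_log_div_add_sub_nonneg (hx : 0 ≤ x) (hy : 0 ≤ y) (hxy : y = 0 → x = 0) :
    0 ≤ x * log (x / y) + y - x := by
  rcases eq_or_ne x 0 with rfl | hx0
  · simpa using hy
  · have hy0 : y ≠ 0 := fun h => hx0 (hxy h)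
    rw [mul_log_div_add_sub_eq_mul_klFun x hy0]
    exact mul_nonneg hy (klFun_nonneg (div_nonneg hx hy))

lemma eq_of_mul_log_div_add_sub_eq_zero (hx : 0 ≤ x) (hy : 0 ≤ y) (hxy : y = 0 → x = 0)
    (h : x * log (x / y) + y - x = 0) : x = y := by
  rcases eq_or_ne x 0 with rfl | hx0
  · simpa [eq_comm] using h
  · have hy0 : y ≠ 0 := fun h => hx0 (hxy h)
    rw [mul_log_div_add_sub_eq_mul_klFun x hy0, mul_eq_zero,
      klFun_eq_zero_iff (div_nonneg hx hy), div_eq_one_iff_eq hy0] at h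
    exact h.resolve_left hy0

end Gibbs

section KL

variable {A : Type*} [Fintype A]

lemma KL_eq_sum (π πbar : A → ℝ) : KL π πbar = ∑ a, π a * log (π a / πbar a) :=
  sum_filter_of_ne fun a _ h hπ => h (by rw [hπ, zero_mul])

lemma eq_of_KL_eq_zero {π πbar : A → ℝ} (hπ : ∀ a, 0 ≤ π a) (hπbar : ∀ a, 0 ≤ πbar a)
    (hsum : ∑ a, πbar a ≤ ∑ a, π a) (hsupp : ∀ a, πbar a = 0 → π a = 0)
    (h : KL π πbar = 0) : π = πbar := by
  have hterms_nonneg a : 0 ≤ π a * log (π a / πbar a) + πbar a - π a :=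
    mul_log_div_add_sub_nonneg (hπ a) (hπbar a) (hsupp a)
  have hsum_terms : ∑ a, (π a * log (π a / πbar a) + πbar a - π a) = 0 := by
    refine le_antisymm ?_ (sum_nonneg fun a _ => hterms_nonneg a)
    rw [sum_sub_distrib, sum_add_distrib, ← KL_eq_sum, h]
    linarith
  funext a
  exact eq_of_mul_log_div_add_sub_eq_zero (hπ a) (hπbar a) (hsupp a)
    ((sum_eq_zero_iff_of_nonneg fun a _ => hterms_nonneg a).1 hsum_terms a (mem_univ a))

lemma KL_mul_exp_div {π πbar f : A → ℝ} {Z : ℝ} (hZ : Z ≠ 0)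
    (hsupp : ∀ a, πbar a = 0 → π a = 0) :
    KL π (fun a => πbar a * exp (f a) / Z)
      = KL π πbar - ∑ a, π a * f a + (∑ a, π a) * log Z := by
  simp only [KL_eq_sum, sum_mul, ← sum_sub_distrib, ← sum_add_distrib]
  refine sum_congr rfl fun a _ => ?_
  rcases eq_or_ne (π a) 0 with hπ | hπ
  · simp [hπ]
  · have hπbar : πbar a ≠ 0 := fun h => hπ (hsupp a h)
    rw [log_div hπ (by positivity), log_div hπ hπbar, log_div (by positivity) hZ,
      log_mul hπbar (exp_pos _).ne', log_exp]
    ring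

end KL

theorem stmt_4_general {A : Type*} [Fintype A] (τ : ℝ) (hτ : 0 < τ) (q : A → ℝ)
    (πbar : A → ℝ) (hbpos : ∀ a, 0 ≤ πbar a)
    (Z : ℝ) (hZ : Z = ∑ b, πbar b * Real.exp (q b / τ))
    (g : A → ℝ) (hg : ∀ a, g a = πbar a * Real.exp (q a / τ) / Z)
    (π : A → ℝ) (hpos : ∀ a, 0 ≤ π a) (hsum : ∑ a, π a = 1)
    (hsupp : ∀ a, πbar a = 0 → π a = 0)
    (hopt : (∑ a, π a * q a) - τ * KL π πbar = τ * Real.log Z) :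
    π = g := by
  obtain ⟨a, ha⟩ : ∃ a, π a ≠ 0 := by
    by_contra! h
    simp [h] at hsum
  have hZpos : 0 < Z := hZ ▸ sum_pos' (fun b _ => mul_nonneg (hbpos b) (exp_pos _).le)
    ⟨a, mem_univ a, mul_pos ((hbpos a).lt_of_ne fun h => ha (hsupp a h.symm)) (exp_pos _)⟩
  have hg_nonneg a : 0 ≤ g a := hg a ▸ div_nonneg (mul_nonneg (hbpos a) (exp_pos _).le) hZpos.le
  have hg_sum : ∑ a, g a = 1 := by
    simp only [hg, ← sum_div, ← hZ, div_self hZpos.ne']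
  have hg_supp a (h : g a = 0) : πbar a = 0 := by
    simpa [hg, hZpos.ne', (exp_pos _).ne'] using h
  have hKL : KL π g = 0 := by
    rw [show g = _ from funext hg, KL_mul_exp_div hZpos.ne' hsupp, hsum]
    simp only [← mul_div_assoc, ← sum_div]
    field_simp
    linarith
  exact eq_of_KL_eq_zero hpos hg_nonneg (by rw [hg_sum, hsum])
    (fun a h => hsupp a (hg_supp a h)) hKL

/-- Uniqueness of the maximizer of the KL-regularized objective: the Gibbs
distribution is the unique optimal policy of the conservative policy
optimization problem (equation (5) of the paper). -/
theorem stmt_4 {A : Type*} [Fintype A] [Nonempty A] (τ : ℝ) (hτ : 0 < τ) (q : A → ℝ)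
    (πbar : A → ℝ) (hbpos : ∀ a, 0 ≤ πbar a) (hbsum : ∑ a, πbar a = 1)
    (Z : ℝ) (hZ : Z = ∑ b, πbar b * Real.exp (q b / τ))
    (g : A → ℝ) (hg : ∀ a, g a = πbar a * Real.exp (q a / τ) / Z)
    (π : A → ℝ) (hpos : ∀ a, 0 ≤ π a) (hsum : ∑ a, π a = 1)
    (hsupp : ∀ a, πbar a = 0 → π a = 0)
    (hopt : (∑ a, π a * q a) - τ * KL π πbar = τ * Real.log Z) :
    π = g :=
  stmt_4_general τ hτ q πbar hbpos Z hZ g hg π hpos hsum hsupp hopt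
end

section
/- Consider a finite discounted MDP. Let τ > 0, let π̄ and π* be policies with the support of π* s contained in the support of π̄ s for every s, let v̄ be a value function of π̄ with associated Q-function Q̄, and let v* be a value function of π*. Suppose that for every state s, π* s maximizes the KL-regularized objective at s: for every probability vector π on A with support contained in the support of π̄ s, ∑_a π a * Q̄ s a − τ * KL(π‖π̄ s) ≤ ∑_a π* s a * Q̄ s a − τ * KL(π* s‖π̄ s). Then v* s ≥ v̄ s for every state s. (Policy-improvement claim of the paper's Proposition 1: the optimal policy of conservative policy optimization improves on the reference policy at every state.) -/
open Finset

lemma KL_self {A : Type*} [Fintype A] (π : A → ℝ) : KL π π = 0 :=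
  sum_eq_zero fun a ha => by
    rw [div_self (mem_filter.1 ha).2, Real.log_one, mul_zero]

lemma sub_le_mul_log_div {x y : ℝ} (hx : 0 < x) (hy : 0 < y) : x - y ≤ x * Real.log (x / y) :=
  calc x - y = x * (1 - (x / y)⁻¹) := by field_simp
    _ ≤ x * Real.log (x / y) :=
      mul_le_mul_of_nonneg_left (Real.one_sub_inv_le_log_of_pos (div_pos hx hy)) hx.le

lemma KL_nonneg {A : Type*} [Fintype A] {π πbar : A → ℝ}
    (h0 : ∀ a, 0 ≤ π a) (h1 : ∑ a, π a = 1) (hb0 : ∀ a, 0 ≤ πbar a) (hb1 : ∑ a, πbar a = 1)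
    (hsupp : ∀ a, πbar a = 0 → π a = 0) : 0 ≤ KL π πbar := by
  set s := univ.filter (fun a => π a ≠ 0)
  have hpointwise : ∀ a ∈ s, π a - πbar a ≤ π a * Real.log (π a / πbar a) := by
    intro a ha
    have hπ : π a ≠ 0 := (mem_filter.1 ha).2
    exact sub_le_mul_log_div ((h0 a).lt_of_ne' hπ) ((hb0 a).lt_of_ne' (mt (hsupp a) hπ))
  have hπs : ∑ a ∈ s, π a = 1 := by
    rw [← h1]
    exact sum_filter_of_ne fun a _ h => h
  have hπbar_s : ∑ a ∈ s, πbar a ≤ 1 :=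
    hb1 ▸ sum_le_sum_of_subset_of_nonneg (filter_subset _ _) fun a _ _ => hb0 a
  have := sum_le_sum hpointwise
  rw [sum_sub_distrib, hπs] at this
  unfold KL
  linarith

lemma sum_mul_reward_add_discount {A S : Type*} [Fintype A] [Fintype S]
    (w r : A → ℝ) (P : A → S → ℝ) (γ : ℝ) (v : S → ℝ) :
    ∑ a, w a * (r a + γ * ∑ s', P a s' * v s') =
      ∑ a, w a * r a + γ * ∑ s', (∑ a, w a * P a s') * v s' := by
  simp only [mul_add, sum_add_distrib, mul_sum, sum_mul]
  rw [sum_comm (γ := S)]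
  congr 1
  refine sum_congr rfl fun a _ => sum_congr rfl fun s' _ => ?_
  ring

lemma nonpos_of_le_discount_mul_stochastic {S : Type*} [Fintype S]
    (M : S → S → ℝ) (hM0 : ∀ s s', 0 ≤ M s s') (hM1 : ∀ s, ∑ s', M s s' = 1)
    {γ : ℝ} (hγ0 : 0 ≤ γ) (hγ1 : γ < 1) {δ : S → ℝ}
    (hδ : ∀ s, δ s ≤ γ * ∑ s', M s s' * δ s') (s : S) : δ s ≤ 0 := by
  obtain ⟨smax, -, hmax⟩ := exists_max_image univ δ ⟨s, mem_univ s⟩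
  have hmean : ∑ s', M smax s' * δ s' ≤ δ smax :=
    calc ∑ s', M smax s' * δ s' ≤ ∑ s', M smax s' * δ smax :=
          sum_le_sum fun s' _ => mul_le_mul_of_nonneg_left (hmax s' (mem_univ s')) (hM0 _ _)
      _ = δ smax := by rw [← sum_mul, hM1, one_mul]
  have : δ smax ≤ γ * δ smax := (hδ smax).trans (mul_le_mul_of_nonneg_left hmean hγ0)
  nlinarith [hmax s (mem_univ s)]

lemma sum_policy_mul_transition_eq_one {S A : Type*} [Fintype S] [Fintype A]
    (P : S → A → S → ℝ) (hP1 : ∀ s a, ∑ s', P s a s' = 1) (π : S → A → ℝ)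
    (hπ1 : ∀ s, ∑ a, π s a = 1) (s : S) : ∑ s', ∑ a, π s a * P s a s' = 1 := by
  rw [sum_comm]
  simp only [← mul_sum, hP1, mul_one, hπ1]

theorem stmt_6_general {S A : Type*} [Fintype S] [Fintype A]
    (P : S → A → S → ℝ) (hP0 : ∀ s a s', 0 ≤ P s a s') (hP1 : ∀ s a, ∑ s', P s a s' = 1)
    (r : S → A → ℝ) (γ : ℝ) (hγ0 : 0 ≤ γ) (hγ1 : γ < 1)
    (τ : ℝ) (hτ : 0 < τ)
    (πbar πstar : S → A → ℝ)
    (hbar : ∀ s, (∀ a, 0 ≤ πbar s a) ∧ ∑ a, πbar s a = 1)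
    (hstar : ∀ s, (∀ a, 0 ≤ πstar s a) ∧ ∑ a, πstar s a = 1)
    (hsupp : ∀ s a, πbar s a = 0 → πstar s a = 0)
    (vbar : S → ℝ)
    (hvbar : ∀ s, vbar s =
      (∑ a, πbar s a * r s a) + γ * ∑ s', (∑ a, πbar s a * P s a s') * vbar s')
    (Qbar : S → A → ℝ)
    (hQbar : ∀ s a, Qbar s a = r s a + γ * ∑ s', P s a s' * vbar s')
    (vstar : S → ℝ)
    (hvstar : ∀ s, vstar s =
      (∑ a, πstar s a * r s a) + γ * ∑ s', (∑ a, πstar s a * P s a s') * vstar s')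
    (hmax : ∀ s, ∀ π : A → ℝ, (∀ a, 0 ≤ π a) → (∑ a, π a) = 1 →
      (∀ a, πbar s a = 0 → π a = 0) →
      (∑ a, π a * Qbar s a) - τ * KL π (πbar s) ≤
        (∑ a, πstar s a * Qbar s a) - τ * KL (πstar s) (πbar s)) :
    ∀ s, vbar s ≤ vstar s := by
  have hQ_avg : ∀ (π : A → ℝ) s, ∑ a, π a * Qbar s a =
      ∑ a, π a * r s a + γ * ∑ s', (∑ a, π a * P s a s') * vbar s' := fun π s => by
    simp only [hQbar, sum_mul_reward_add_discount]
  have himprove : ∀ s, vbar s ≤ ∑ a, πstar s a * Qbar s a := fun s => by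
    have h := hmax s (πbar s) (hbar s).1 (hbar s).2 fun _ h => h
    rw [KL_self, mul_zero, sub_zero, hQ_avg, ← hvbar] at h
    have hKL := KL_nonneg (hstar s).1 (hstar s).2 (hbar s).1 (hbar s).2 (hsupp s)
    linarith [mul_nonneg hτ.le hKL]
  have hgap : ∀ s, vbar s - vstar s ≤
      γ * ∑ s', (∑ a, πstar s a * P s a s') * (vbar s' - vstar s') := fun s => by
    have h := himprove s
    rw [hQ_avg] at h
    simp only [mul_sub, sum_sub_distrib]
    linarith [hvstar s]
  intro s
  have := nonpos_of_le_discount_mul_stochastic _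
    (fun s s' => sum_nonneg fun a _ => mul_nonneg ((hstar s).1 a) (hP0 s a s'))
    (sum_policy_mul_transition_eq_one P hP1 πstar fun s => (hstar s).2) hγ0 hγ1 hgap s
  linarith

/-- Policy-improvement claim of Proposition 1: if `πstar` maximizes the KL-regularized
objective (w.r.t. the Q-function of `πbar`) at every state, then the value of `πstar`
dominates the value of `πbar` at every state. -/
theorem stmt_6 {S A : Type*} [Fintype S] [Nonempty S] [Fintype A] [Nonempty A]
    (P : S → A → S → ℝ) (hP0 : ∀ s a s', 0 ≤ P s a s') (hP1 : ∀ s a, ∑ s', P s a s' = 1)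
    (r : S → A → ℝ) (γ : ℝ) (hγ0 : 0 ≤ γ) (hγ1 : γ < 1)
    (τ : ℝ) (hτ : 0 < τ)
    (πbar πstar : S → A → ℝ)
    (hbar : ∀ s, (∀ a, 0 ≤ πbar s a) ∧ ∑ a, πbar s a = 1)
    (hstar : ∀ s, (∀ a, 0 ≤ πstar s a) ∧ ∑ a, πstar s a = 1)
    (hsupp : ∀ s a, πbar s a = 0 → πstar s a = 0)
    (vbar : S → ℝ)
    (hvbar : ∀ s, vbar s =
      (∑ a, πbar s a * r s a) + γ * ∑ s', (∑ a, πbar s a * P s a s') * vbar s')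
    (Qbar : S → A → ℝ)
    (hQbar : ∀ s a, Qbar s a = r s a + γ * ∑ s', P s a s' * vbar s')
    (vstar : S → ℝ)
    (hvstar : ∀ s, vstar s =
      (∑ a, πstar s a * r s a) + γ * ∑ s', (∑ a, πstar s a * P s a s') * vstar s')
    (hmax : ∀ s, ∀ π : A → ℝ, (∀ a, 0 ≤ π a) → (∑ a, π a) = 1 →
      (∀ a, πbar s a = 0 → π a = 0) →
      (∑ a, π a * Qbar s a) - τ * KL π (πbar s) ≤
        (∑ a, πstar s a * Qbar s a) - τ * KL (πstar s) (πbar s)) :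
    ∀ s, vbar s ≤ vstar s :=
  stmt_6_general P hP0 hP1 r γ hγ0 hγ1 τ hτ πbar πstar hbar hstar hsupp vbar hvbar Qbar hQbar vstar
    hvstar hmax
end

section
/- Let S be a finite nonempty type, let P' : Matrix S S ℝ be row-stochastic, let 0 ≤ γ < 1, and let r', v', v : S → ℝ. If v' s = r' s + γ * ∑_{s'} P' s s' * v' s' for every s, then v' − v = (1 − γ • P')⁻¹.mulVec (fun s => r' s + γ * ∑_{s'} P' s s' * v s' − v s). (Value difference lemma in matrix form, used in both parts of the proof of the paper's Lemma 2.) -/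
/-!
Subtracting `v` from the Bellman equation `v' = r' + γ P' v'` gives
`(1 - γ P') (v' - v) = r' + γ P' v - v`. The matrix `1 - γ P'` is invertible by the Neumann
series, since a row-stochastic matrix has ∞-operator norm at most `1`, so `‖γ P'‖ ≤ |γ| < 1`.
-/

namespace Matrix

variable {n : Type*} [Fintype n] [DecidableEq n]

section LinftyOpNorm

attribute [local instance] Matrix.linftyOpNormedRing Matrix.linftyOpNormedAlgebra

theorem linfty_opNorm_le_one_of_mem_rowStochastic {M : Matrix n n ℝ}
    (hM : M ∈ rowStochastic ℝ n) : ‖M‖ ≤ 1 := by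
  rw [linfty_opNorm_def, NNReal.coe_le_one, Finset.sup_le_iff]
  intro i _
  rw [← NNReal.coe_le_one, NNReal.coe_sum]
  simp only [coe_nnnorm, Real.norm_of_nonneg (nonneg_of_mem_rowStochastic hM),
    sum_row_of_mem_rowStochastic hM i, le_refl]

theorem isUnit_one_sub_smul_of_mem_rowStochastic {M : Matrix n n ℝ}
    (hM : M ∈ rowStochastic ℝ n) {γ : ℝ} (hγ : |γ| < 1) : IsUnit (1 - γ • M) :=
  isUnit_one_sub_of_norm_lt_one <| calc
    ‖γ • M‖ ≤ ‖γ‖ * ‖M‖ := norm_smul_le γ M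
    _ ≤ |γ| * 1 := by gcongr; exacts [le_rfl, linfty_opNorm_le_one_of_mem_rowStochastic hM]
    _ < 1 := by rwa [mul_one]

end LinftyOpNorm

theorem sub_eq_inv_one_sub_smul_mulVec {α : Type*} [CommRing α] {M : Matrix n n α} {γ : α}
    (hM : IsUnit (1 - γ • M)) {r v' : n → α} (hv' : v' = r + γ • M *ᵥ v') (v : n → α) :
    v' - v = (1 - γ • M)⁻¹ *ᵥ (r + γ • M *ᵥ v - v) := by
  have : Invertible (1 - γ • M) := hM.invertible
  refine (inv_mulVec_eq_vec ?_).symm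
  rw [sub_mulVec, one_mulVec, smul_mulVec, mulVec_sub, smul_sub]
  nth_rewrite 1 [hv']
  abel

end Matrix

theorem stmt_10_general {S : Type*} [Fintype S] [DecidableEq S]
    (P' : Matrix S S ℝ) (hP0 : ∀ s s', 0 ≤ P' s s') (hP1 : ∀ s, ∑ s', P' s s' = 1)
    (γ : ℝ) (hγ0 : 0 ≤ γ) (hγ1 : γ < 1) (r' v' v : S → ℝ)
    (hv' : ∀ s, v' s = r' s + γ * ∑ s', P' s s' * v' s') :
    v' - v = (1 - γ • P')⁻¹.mulVec
      (fun s => r' s + γ * (∑ s', P' s s' * v s') - v s) := by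
  have hP : P' ∈ Matrix.rowStochastic ℝ S := Matrix.mem_rowStochastic_iff_sum.mpr ⟨hP0, hP1⟩
  have hγ : |γ| < 1 := abs_lt.mpr ⟨by linarith, hγ1⟩
  exact Matrix.sub_eq_inv_one_sub_smul_mulVec
    (Matrix.isUnit_one_sub_smul_of_mem_rowStochastic hP hγ) (funext hv') v

/-- Value difference lemma in matrix form. -/
theorem stmt_10 {S : Type*} [Fintype S] [Nonempty S] [DecidableEq S]
    (P' : Matrix S S ℝ) (hP0 : ∀ s s', 0 ≤ P' s s') (hP1 : ∀ s, ∑ s', P' s s' = 1)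
    (γ : ℝ) (hγ0 : 0 ≤ γ) (hγ1 : γ < 1) (r' v' v : S → ℝ)
    (hv' : ∀ s, v' s = r' s + γ * ∑ s', P' s s' * v' s') :
    v' - v = (1 - γ • P')⁻¹.mulVec
      (fun s => r' s + γ * (∑ s', P' s s' * v s') - v s) :=
  stmt_10_general P' hP0 hP1 γ hγ0 hγ1 r' v' v hv'
end

section
/- Let A be a finite type with 2 ≤ |A|, let k ≥ 1, let B > 0, and let q_0, ..., q_{k-1} : A → ℝ satisfy 0 ≤ q_i a ≤ B for all i < k and all a. Set τ = B * Real.sqrt (k / (2 * Real.log |A|)) and let π_0, ..., π_{k-1} be the exponential-weights iterates for q_0, ..., q_{k-1} with parameter τ. Then for every probability vector π on A, ∑_{i<k} (∑_a π a * q_i a − ∑_a π_i a * q_i a) ≤ B * Real.sqrt (2 * k * Real.log |A|). (Regret bound of the mirror-descent/exponential-weights algorithm, the key inequality in the proof of the paper's Lemma 2.) -/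
lemma exp_le_quadratic {x : ℝ} (hx : x ≤ 0) : Real.exp x ≤ 1 + x + x ^ 2 / 2 := by
  have key : MonotoneOn (fun y : ℝ => 1 - y + y ^ 2 / 2 - Real.exp (-y)) (Set.Ici 0) := by
    apply monotoneOn_of_deriv_nonneg (convex_Ici 0)
    · fun_prop
    · fun_prop
    · intro z hz
      have hd : HasDerivAt (fun y : ℝ => 1 - y + y ^ 2 / 2 - Real.exp (-y))
          (-1 + z - Real.exp (-z) * (-1)) z := by
        have h1 : HasDerivAt (fun y : ℝ => Real.exp (-y)) (Real.exp (-z) * (-1)) z := by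
          exact (Real.hasDerivAt_exp (-z)).comp z (hasDerivAt_neg z)
        have h2 : HasDerivAt (fun y : ℝ => 1 - y + y ^ 2 / 2) (-1 + z) z := by
          have := ((hasDerivAt_id z).const_sub 1).add
            (((hasDerivAt_pow 2 z)).div_const 2)
          exact this.congr_deriv (by norm_num)
        exact h2.sub h1
      rw [hd.deriv]
      have := Real.add_one_le_exp (-z)
      linarith
  have h0 : (fun y : ℝ => 1 - y + y ^ 2 / 2 - Real.exp (-y)) 0 ≤
      (fun y : ℝ => 1 - y + y ^ 2 / 2 - Real.exp (-y)) (-x) :=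
    key (by simp) (by simp only [Set.mem_Ici]; linarith) (by linarith)
  norm_num at h0
  nlinarith [h0]


/-- Regret bound of the mirror-descent/exponential-weights algorithm. -/
theorem stmt_11 {A : Type*} [Fintype A] (hA : 2 ≤ Fintype.card A)
    (k : ℕ) (hk : 1 ≤ k) (B : ℝ) (hB : 0 < B)
    (q : ℕ → A → ℝ) (hq : ∀ i < k, ∀ a, 0 ≤ q i a ∧ q i a ≤ B)
    (τ : ℝ) (hτ : τ = B * Real.sqrt ((k : ℝ) / (2 * Real.log (Fintype.card A))))
    (π : ℕ → A → ℝ)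
    (h0 : ∀ a, π 0 a = 1 / (Fintype.card A : ℝ))
    (hrec : ∀ t < k, ∀ a, π (t + 1) a =
      π t a * Real.exp (q t a / τ) / (∑ b, π t b * Real.exp (q t b / τ)))
    (p : A → ℝ) (hp0 : ∀ a, 0 ≤ p a) (hp1 : ∑ a, p a = 1) :
    ∑ i ∈ Finset.range k, ((∑ a, p a * q i a) - ∑ a, π i a * q i a) ≤
      B * Real.sqrt (2 * (k : ℝ) * Real.log (Fintype.card A)) := by
  classical
  have hNE : Nonempty A := Fintype.card_pos_iff.mp (by omega)
  have hN1 : (1:ℝ) < (Fintype.card A : ℝ) := by exact_mod_cast hA.trans_lt' one_lt_two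
  set L : ℝ := Real.log (Fintype.card A) with hLdef
  have hL : 0 < L := Real.log_pos hN1
  have hkpos : (0:ℝ) < (k:ℝ) := by exact_mod_cast hk.trans_lt' zero_lt_one
  have hτpos : 0 < τ := by
    rw [hτ]
    exact mul_pos hB (Real.sqrt_pos.mpr (by positivity))
  -- weights
  set G : ℕ → A → ℝ := fun t a => ∑ i ∈ Finset.range t, q i a with hG
  set w : ℕ → A → ℝ := fun t a => Real.exp (G t a / τ) with hw
  set W : ℕ → ℝ := fun t => ∑ a, w t a with hW
  have hwpos : ∀ t a, 0 < w t a := fun t a => Real.exp_pos _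
  have hWpos : ∀ t, 0 < W t :=
    fun t => Finset.sum_pos (fun a _ => hwpos t a) Finset.univ_nonempty
  have hwsucc : ∀ t a, w (t+1) a = w t a * Real.exp (q t a / τ) := by
    intro t a
    simp only [hw, hG, Finset.sum_range_succ, ← Real.exp_add]
    ring_nf
  have hπ : ∀ t, t ≤ k → ∀ a, π t a = w t a / W t := by
    intro t
    induction t with
    | zero =>
      intro _ a
      have hW0 : W 0 = (Fintype.card A : ℝ) := by
        simp [hW, hw, hG]
      rw [h0 a, hW0]
      simp [hw, hG]
    | succ t ih =>
      intro ht a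
      have ht' : t < k := ht
      have e1 := ih ht'.le
      rw [hrec t ht' a]
      have key : ∀ b, π t b * Real.exp (q t b / τ) = w (t+1) b / W t := by
        intro b
        rw [e1 b, hwsucc t b]
        ring
      simp only [key]
      rw [← Finset.sum_div]
      show w (t+1) a / W t / (W (t+1) / W t) = w (t+1) a / W (t+1)
      rw [div_div_div_cancel_right₀ (hWpos t).ne' (w (t+1) a) (W (t+1))]
  have hπsum : ∀ t, t ≤ k → ∑ a, π t a = 1 := by
    intro t ht
    simp only [hπ t ht]
    rw [← Finset.sum_div, div_self (hWpos t).ne']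
  have hπpos : ∀ t, t ≤ k → ∀ a, 0 < π t a := by
    intro t ht a
    rw [hπ t ht a]
    exact div_pos (hwpos t a) (hWpos t)
  -- normalizer
  set S : ℕ → ℝ := fun t => ∑ a, π t a * Real.exp (q t a / τ) with hS
  have hSW : ∀ t, t < k → S t = W (t+1) / W t := by
    intro t ht
    simp only [hS]
    have : ∀ b, π t b * Real.exp (q t b / τ) = w (t+1) b / W t := by
      intro b
      rw [hπ t ht.le b, hwsucc t b]
      ring
    simp only [this]
    rw [← Finset.sum_div]
  have htel : ∑ t ∈ Finset.range k, Real.log (S t) = Real.log (W k) - Real.log (W 0) := by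
    have : ∀ t ∈ Finset.range k, Real.log (S t)
        = Real.log (W (t+1)) - Real.log (W t) := by
      intro t ht
      rw [hSW t (Finset.mem_range.mp ht), Real.log_div (hWpos _).ne' (hWpos _).ne']
    rw [Finset.sum_congr rfl this, Finset.sum_range_sub (fun t => Real.log (W t))]
  have hW0log : Real.log (W 0) = L := by
    have hW0 : W 0 = (Fintype.card A : ℝ) := by simp [hW, hw, hG]
    rw [hW0]
  -- upper bound per step
  have hub : ∀ t, t < k → Real.log (S t) ≤ (∑ a, π t a * q t a) / τ + B^2 / (2*τ^2) := by
    intro t ht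
    set T : ℝ := ∑ a, π t a * Real.exp ((q t a - B) / τ) with hT
    have hTpos : 0 < T :=
      Finset.sum_pos (fun a _ => mul_pos (hπpos t ht.le a) (Real.exp_pos _))
        Finset.univ_nonempty
    have hST : S t = Real.exp (B / τ) * T := by
      simp only [hS, hT, Finset.mul_sum]
      refine Finset.sum_congr rfl fun a _ => ?_
      rw [show q t a / τ = (q t a - B) / τ + B / τ by ring, Real.exp_add]
      ring
    have hTle : T ≤ 1 + ((∑ a, π t a * q t a) - B) / τ + B^2 / (2*τ^2) := by
      have step : ∀ a, π t a * Real.exp ((q t a - B) / τ)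
          ≤ π t a * (1 + (q t a - B) / τ + B^2 / (2*τ^2)) := by
        intro a
        apply mul_le_mul_of_nonneg_left _ (hπpos t ht.le a).le
        have hqa := hq t ht a
        have hx : (q t a - B) / τ ≤ 0 := div_nonpos_of_nonpos_of_nonneg (by linarith [hqa.2]) hτpos.le
        refine (exp_le_quadratic hx).trans ?_
        have h2 : ((q t a - B) / τ)^2 ≤ B^2 / τ^2 := by
          rw [div_pow]
          exact div_le_div_of_nonneg_right (by nlinarith [hqa.1, hqa.2]) (by positivity)
        have h3 : B^2 / τ^2 = 2 * (B^2 / (2*τ^2)) := by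
          field_simp
        linarith
      calc T ≤ ∑ a, π t a * (1 + (q t a - B) / τ + B^2 / (2*τ^2)) :=
            Finset.sum_le_sum fun a _ => step a
        _ = 1 + ((∑ a, π t a * q t a) - B) / τ + B^2 / (2*τ^2) := by
            have h1 := hπsum t ht.le
            have e : ∀ x:A, π t x * (1 + (q t x - B)/τ + B^2/(2*τ^2))
                = π t x + ((π t x * q t x)/τ - π t x * (B/τ)) + π t x * (B^2/(2*τ^2)) :=
              fun x => by ring
            simp only [e]
            rw [Finset.sum_add_distrib, Finset.sum_add_distrib, Finset.sum_sub_distrib,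
              ← Finset.sum_div, ← Finset.sum_mul, ← Finset.sum_mul, h1, one_mul, one_mul]
            ring
    have hlog1 : Real.log T ≤ T - 1 := Real.log_le_sub_one_of_pos hTpos
    rw [hST, Real.log_mul (Real.exp_pos _).ne' hTpos.ne', Real.log_exp]
    have hd : ((∑ a, π t a * q t a) - B)/τ = (∑ a, π t a * q t a)/τ - B/τ := by ring
    rw [hd] at hTle
    linarith
  -- lower bound
  have hlb : (∑ a, p a * G k a) / τ ≤ Real.log (W k) := by
    obtain ⟨a₀, _, hmax⟩ := Finset.exists_max_image Finset.univ (G k) Finset.univ_nonempty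
    have h1 : ∑ a, p a * G k a ≤ G k a₀ := by
      calc ∑ a, p a * G k a ≤ ∑ a, p a * G k a₀ :=
            Finset.sum_le_sum fun a _ => mul_le_mul_of_nonneg_left (hmax a (Finset.mem_univ a)) (hp0 a)
        _ = G k a₀ := by rw [← Finset.sum_mul, hp1, one_mul]
    have h2 : Real.exp (G k a₀ / τ) ≤ W k :=
      Finset.single_le_sum (fun a _ => (hwpos k a).le) (Finset.mem_univ a₀)
    calc (∑ a, p a * G k a) / τ ≤ G k a₀ / τ := by
          exact div_le_div_of_nonneg_right h1 hτpos.le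
        _ = Real.log (Real.exp (G k a₀ / τ)) := (Real.log_exp _).symm
        _ ≤ Real.log (W k) := Real.log_le_log (Real.exp_pos _) h2
  -- combine
  have hswap : ∑ a, p a * G k a = ∑ t ∈ Finset.range k, ∑ a, p a * q t a := by
    simp only [hG, Finset.mul_sum]
    rw [Finset.sum_comm]
  have h3 : ∑ t ∈ Finset.range k, Real.log (S t)
      ≤ (∑ t ∈ Finset.range k, ∑ a, π t a * q t a) / τ + k * (B^2 / (2*τ^2)) := by
    calc ∑ t ∈ Finset.range k, Real.log (S t)
        ≤ ∑ t ∈ Finset.range k, ((∑ a, π t a * q t a) / τ + B^2 / (2*τ^2)) :=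
          Finset.sum_le_sum fun t ht => hub t (Finset.mem_range.mp ht)
      _ = (∑ t ∈ Finset.range k, ∑ a, π t a * q t a) / τ + k * (B^2 / (2*τ^2)) := by
          rw [Finset.sum_add_distrib, ← Finset.sum_div, Finset.sum_const, Finset.card_range,
            nsmul_eq_mul]
  -- main inequality with τ
  have hmain : ∑ i ∈ Finset.range k, ((∑ a, p a * q i a) - ∑ a, π i a * q i a)
      ≤ τ * L + k * B^2 / (2*τ) := by
    have e1 : (∑ t ∈ Finset.range k, ∑ a, p a * q t a) / τ ≤ Real.log (W k) := by
      rw [← hswap]; exact hlb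
    have e2 : Real.log (W k) ≤ L + (∑ t ∈ Finset.range k, ∑ a, π t a * q t a) / τ
        + k * (B^2 / (2*τ^2)) := by
      have := htel
      rw [hW0log] at this
      linarith [h3]
    rw [Finset.sum_sub_distrib]
    have hfinal : ∑ t ∈ Finset.range k, ∑ a, p a * q t a
        ≤ τ * L + (∑ t ∈ Finset.range k, ∑ a, π t a * q t a) + k * B^2 / (2*τ) := by
      have h4 := e1.trans e2
      have h5 := mul_le_mul_of_nonneg_left h4 hτpos.le
      have hτne : τ ≠ 0 := hτpos.ne'
      rw [mul_comm τ _, div_mul_cancel₀ _ hτne] at h5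
      have : τ * (L + (∑ t ∈ Finset.range k, ∑ a, π t a * q t a) / τ + k * (B^2 / (2*τ^2)))
          = τ * L + (∑ t ∈ Finset.range k, ∑ a, π t a * q t a) + k * B^2 / (2*τ) := by
        field_simp
      linarith [this ▸ h5]
    linarith
  -- arithmetic: τ * L + k * B^2 / (2τ) = B * sqrt (2kL)
  set u : ℝ := Real.sqrt (2 * (k:ℝ) * L) with hu
  have hu2 : u^2 = 2 * (k:ℝ) * L := Real.sq_sqrt (by positivity)
  have hupos : 0 < u := Real.sqrt_pos.mpr (by positivity)
  have hτu : τ = B * u / (2 * L) := by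
    rw [hτ]
    have harg : (k:ℝ) / (2*L) = (u / (2*L))^2 := by
      rw [div_pow, hu2]
      field_simp
    rw [harg, Real.sqrt_sq (by positivity)]
    ring
  have heq : τ * L + k * B^2 / (2*τ) = B * u := by
    rw [hτu]
    field_simp
    linear_combination (-1:ℝ) * hu2
  linarith [hmain, heq]
end

section
/- Let A be a finite nonempty type, let τ > 0, let q_0, ..., q_{k-1} : A → ℝ with k ≥ 1, and let π_0, ..., π_{k-1} be the exponential-weights iterates for q_0, ..., q_{k-1} with parameter τ. Then ∑_{i<k} ∑_a π_{k-1} a * q_i a ≥ ∑_{i<k} ∑_a π_i a * q_i a. (Cumulative-payoff monotonicity of exponential weights: the last iterate collects at least as much cumulative reward as the sequence of iterates; this is the claim proved via the telescoping argument in equations (politex-3)–(politex-4) in the proof of the paper's Lemma 2, showing the second error term is nonpositive.) -/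
-- Jensen for exp
lemma jensen_exp {A : Type*} [Fintype A] (w y : A → ℝ)
    (hw : ∀ a, 0 ≤ w a) (hw1 : ∑ a, w a = 1) :
    Real.exp (∑ a, w a * y a) ≤ ∑ a, w a * Real.exp (y a) := by
  have := convexOn_exp.map_sum_le (t := Finset.univ) (w := w) (p := y)
    (fun a _ => hw a) hw1 (fun a _ => Set.mem_univ _)
  simpa [smul_eq_mul] using this

-- Jensen for log
lemma jensen_log {A : Type*} [Fintype A] (w x : A → ℝ)
    (hw : ∀ a, 0 ≤ w a) (hw1 : ∑ a, w a = 1) (hx : ∀ a, 0 < x a) :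
    ∑ a, w a * Real.log (x a) ≤ Real.log (∑ a, w a * x a) := by
  have := (strictConcaveOn_log_Ioi.concaveOn).le_map_sum (t := Finset.univ)
    (w := w) (p := x) (fun a _ => hw a) hw1 (fun a _ => hx a)
  simpa [smul_eq_mul] using this

/-- Cumulative-payoff monotonicity of exponential weights: the last iterate collects
at least as much cumulative reward as the sequence of iterates. -/
theorem stmt_12 {A : Type*} [Fintype A] [Nonempty A]
    (τ : ℝ) (hτ : 0 < τ) (k : ℕ) (hk : 1 ≤ k) (q : ℕ → A → ℝ)
    (π : ℕ → A → ℝ)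
    (h0 : ∀ a, π 0 a = 1 / (Fintype.card A : ℝ))
    (hrec : ∀ t < k, ∀ a, π (t + 1) a =
      π t a * Real.exp (q t a / τ) / (∑ b, π t b * Real.exp (q t b / τ))) :
    ∑ i ∈ Finset.range k, ∑ a, π i a * q i a ≤
      ∑ i ∈ Finset.range k, ∑ a, π (k - 1) a * q i a := by
  obtain ⟨n, rfl⟩ : ∃ n, k = n + 1 := ⟨k - 1, (Nat.succ_pred_eq_of_pos hk).symm⟩
  simp only [Nat.add_sub_cancel]
  set S : ℕ → A → ℝ := fun t a => ∑ i ∈ Finset.range t, q i a with hS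
  set w : ℕ → A → ℝ := fun t a => Real.exp (S t a / τ) with hwdef
  set Z : ℕ → ℝ := fun t => ∑ a, w t a with hZdef
  have hwpos : ∀ t a, 0 < w t a := fun t a => Real.exp_pos _
  have hZpos : ∀ t, 0 < Z t := fun t =>
    Finset.sum_pos (fun a _ => hwpos t a) Finset.univ_nonempty
  -- closed form
  have hcf : ∀ t ≤ n, ∀ a, π t a = w t a / Z t := by
    intro t ht
    induction t with
    | zero =>
      intro a
      have h1 : ∀ a, w 0 a = 1 := by intro a; simp [hwdef, hS]
      have : Z 0 = (Fintype.card A : ℝ) := by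
        simp [hZdef, h1, Finset.card_univ]
      rw [h0, this, h1]
    | succ t ih =>
      have ht' : t ≤ n := Nat.le_of_succ_le ht
      have ih := ih ht'
      intro a
      have hw1 : ∀ a, w (t + 1) a = w t a * Real.exp (q t a / τ) := by
        intro a
        simp only [hwdef, hS, Finset.sum_range_succ, add_div, Real.exp_add]
      have hZ1 : Z (t + 1) = ∑ b, w t b * Real.exp (q t b / τ) := by
        simp only [hZdef]; exact Finset.sum_congr rfl fun b _ => hw1 b
      rw [hrec t (by omega) a, ih a, hw1, hZ1]
      have hden : (∑ b, π t b * Real.exp (q t b / τ))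
          = (∑ b, w t b * Real.exp (q t b / τ)) / Z t := by
        rw [Finset.sum_div]
        exact Finset.sum_congr rfl fun b _ => by rw [ih b]; ring
      rw [hden]
      field_simp
      rw [mul_comm (w t a), mul_div_mul_left _ _ (hZpos t).ne']
  have hπpos : ∀ t ≤ n, ∀ a, 0 < π t a := by
    intro t ht a; rw [hcf t ht a]; exact div_pos (hwpos t a) (hZpos t)
  have hπsum : ∀ t ≤ n, ∑ a, π t a = 1 := by
    intro t ht
    have : ∑ a, π t a = (∑ a, w t a) / Z t := by
      rw [Finset.sum_div]; exact Finset.sum_congr rfl fun a _ => hcf t ht a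
    rw [this, div_self (hZpos t).ne']
  -- Jensen up step
  have hstep : ∀ t < n, ∑ a, π t a * q t a ≤ τ * Real.log (Z (t+1)) - τ * Real.log (Z t) := by
    intro t ht
    have ht' : t ≤ n := ht.le
    have hZ1 : Z (t + 1) = ∑ a, w t a * Real.exp (q t a / τ) := by
      simp only [hZdef]
      exact Finset.sum_congr rfl fun a _ => by
        simp only [hwdef, hS, Finset.sum_range_succ, add_div, Real.exp_add]
    have hratio : Z (t+1) / Z t = ∑ a, π t a * Real.exp (q t a / τ) := by
      rw [hZ1, Finset.sum_div]
      exact Finset.sum_congr rfl fun a _ => by rw [hcf t ht' a]; ring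
    have hjen : Real.exp (∑ a, π t a * (q t a / τ)) ≤ Z (t+1) / Z t := by
      rw [hratio]
      exact jensen_exp _ _ (fun a => (hπpos t ht' a).le) (hπsum t ht')
    have hlog : ∑ a, π t a * (q t a / τ) ≤ Real.log (Z (t+1) / Z t) := by
      rw [← Real.log_exp (∑ a, π t a * (q t a / τ))]
      exact Real.log_le_log (Real.exp_pos _) hjen
    rw [Real.log_div (hZpos _).ne' (hZpos _).ne'] at hlog
    have := mul_le_mul_of_nonneg_left hlog hτ.le
    calc ∑ a, π t a * q t a = τ * ∑ a, π t a * (q t a / τ) := by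
          rw [Finset.mul_sum]
          exact Finset.sum_congr rfl fun a _ => by field_simp
      _ ≤ τ * (Real.log (Z (t+1)) - Real.log (Z t)) := this
      _ = τ * Real.log (Z (t+1)) - τ * Real.log (Z t) := by ring
  -- telescoping
  have htel : ∑ t ∈ Finset.range n, ∑ a, π t a * q t a
      ≤ τ * Real.log (Z n) - τ * Real.log (Z 0) := by
    have := Finset.sum_range_sub (fun t => τ * Real.log (Z t)) n
    rw [← this]
    exact Finset.sum_le_sum fun t ht => hstep t (Finset.mem_range.mp ht)
  -- entropy bound : τ log Z n - τ log Z 0 ≤ ∑ a, π n a * S n a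
  have hZ0 : Z 0 = (Fintype.card A : ℝ) := by
    have : ∀ a, w 0 a = 1 := fun a => by simp [hwdef, hS]
    simp [hZdef, this, Finset.card_univ]
  have hent : τ * Real.log (Z n) - τ * Real.log (Z 0) ≤ ∑ a, π n a * S n a := by
    have hSlog : ∀ a, S n a = τ * Real.log (Z n * π n a) := by
      intro a
      rw [hcf n le_rfl a, mul_div_cancel₀ _ (hZpos n).ne']
      rw [hwdef]
      simp only [Real.log_exp]
      field_simp
    have hjen : ∑ a, π n a * Real.log ((π n a)⁻¹) ≤ Real.log (Fintype.card A : ℝ) := by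
      have h1 : ∑ a, π n a * (π n a)⁻¹ = (Fintype.card A : ℝ) := by
        have : ∀ a, π n a * (π n a)⁻¹ = 1 := fun a => mul_inv_cancel₀ (hπpos n le_rfl a).ne'
        simp [this, Finset.card_univ]
      have := jensen_log (π n) (fun a => (π n a)⁻¹) (fun a => (hπpos n le_rfl a).le)
        (hπsum n le_rfl) (fun a => inv_pos.mpr (hπpos n le_rfl a))
      rwa [h1] at this
    have key : ∑ a, π n a * S n a
        = τ * Real.log (Z n) - τ * ∑ a, π n a * Real.log ((π n a)⁻¹) := by
      have : ∀ a, π n a * S n a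
          = τ * (Real.log (Z n) * π n a) - τ * (π n a * Real.log ((π n a)⁻¹)) := by
        intro a
        rw [hSlog a, Real.log_mul (hZpos n).ne' (hπpos n le_rfl a).ne',
          Real.log_inv]
        ring
      rw [Finset.sum_congr rfl fun a _ => this a, Finset.sum_sub_distrib,
        ← Finset.mul_sum, ← Finset.mul_sum, ← Finset.mul_sum, hπsum n le_rfl]
      ring
    rw [key, hZ0]
    have := mul_le_mul_of_nonneg_left hjen hτ.le
    linarith
  -- combine
  have hswap : ∑ a, π n a * S n a = ∑ i ∈ Finset.range n, ∑ a, π n a * q i a := by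
    simp only [hS, Finset.mul_sum]
    rw [Finset.sum_comm]
  rw [Finset.sum_range_succ, Finset.sum_range_succ]
  have : ∑ t ∈ Finset.range n, ∑ a, π t a * q t a
      ≤ ∑ i ∈ Finset.range n, ∑ a, π n a * q i a := by
    rw [← hswap]; exact htel.trans hent
  linarith
end

section
/- Consider a finite discounted MDP with 2 ≤ |A| and rewards satisfying 0 ≤ r s a ≤ 1 for all s, a. Let k ≥ 1, set τ = (1/(1 − γ)) * Real.sqrt (k / (2 * Real.log |A|)), and let π_0, ..., π_{k-1} be the Politex iterates with parameter τ, with value functions v_0, ..., v_{k-1}. Then for every policy π* with value function v^{π*} and every state s, v^{π*} s − (1/k) * ∑_{i<k} v_i s ≤ (1/(1 − γ)^2) * Real.sqrt (2 * Real.log |A| / k). (First half of the proof of the paper's Lemma 2: the value of any comparator policy exceeds the average value of the Politex iterates by at most the stated bound.) -/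
lemma chord_exp {c y : ℝ} (hc : 0 < c) (hy : -c ≤ y) (hy' : y ≤ c) :
    Real.exp y ≤ Real.cosh c + (y / c) * Real.sinh c := by
  have h2c : (0:ℝ) < 2 * c := by linarith
  have ha : 0 ≤ (c - y) / (2 * c) := div_nonneg (by linarith) h2c.le
  have hb : 0 ≤ (c + y) / (2 * c) := div_nonneg (by linarith) h2c.le
  have hab : (c - y) / (2 * c) + (c + y) / (2 * c) = 1 := by
    rw [← add_div, div_eq_one_iff_eq h2c.ne']; ring
  have := convexOn_exp.2 (Set.mem_univ (-c)) (Set.mem_univ c) ha hb hab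
  simp only [smul_eq_mul] at this
  have hcomb : (c - y) / (2 * c) * (-c) + (c + y) / (2 * c) * c = y := by
    rw [div_mul_eq_mul_div, div_mul_eq_mul_div, ← add_div,
      div_eq_iff h2c.ne']; ring
  rw [hcomb] at this
  refine this.trans (le_of_eq ?_)
  rw [Real.cosh_eq, Real.sinh_eq]
  field_simp
  ring

lemma mgf_bound {A : Type*} [Fintype A] (p X : A → ℝ) (hp0 : ∀ a, 0 ≤ p a)
    (hp1 : ∑ a, p a = 1) (R η : ℝ) (hR : 0 < R) (hη : 0 < η)
    (hX0 : ∀ a, 0 ≤ X a) (hXR : ∀ a, X a ≤ R) :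
    Real.log (∑ a, p a * Real.exp (η * X a)) ≤
      η * (∑ a, p a * X a) + η ^ 2 * R ^ 2 / 2 := by
  set μ := ∑ a, p a * X a with hμ
  have hμ0 : 0 ≤ μ := Finset.sum_nonneg fun a _ => mul_nonneg (hp0 a) (hX0 a)
  have hμR : μ ≤ R := by
    calc μ ≤ ∑ a, p a * R := Finset.sum_le_sum fun a _ => mul_le_mul_of_nonneg_left (hXR a) (hp0 a)
    _ = R := by rw [← Finset.sum_mul, hp1, one_mul]
  have hZpos : 0 < ∑ a, p a * Real.exp (η * X a) := by
    have : ∃ a : A, 0 < p a := by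
      by_contra h
      push_neg at h
      have : ∑ a, p a = 0 := Finset.sum_eq_zero fun a _ => le_antisymm (h a) (hp0 a)
      rw [hp1] at this; norm_num at this
    obtain ⟨a0, ha0⟩ := this
    exact Finset.sum_pos' (fun a _ => mul_nonneg (hp0 a) (Real.exp_pos _).le)
      ⟨a0, Finset.mem_univ a0, mul_pos ha0 (Real.exp_pos _)⟩
  rw [Real.log_le_iff_le_exp hZpos]
  set E := Real.exp (η * μ) with hE
  set C := Real.cosh (η * R) with hC
  set Sh := Real.sinh (η * R) with hSh
  have key : ∑ a, p a * Real.exp (η * X a) ≤ E * C := by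
    have step : ∀ a, p a * Real.exp (η * X a) ≤
        E * C * p a + (E * Sh / R) * (p a * X a - μ * p a) := by
      intro a
      have h1 : Real.exp (η * X a) = E * Real.exp (η * (X a - μ)) := by
        rw [hE, ← Real.exp_add]; congr 1; ring
      have h2 : Real.exp (η * (X a - μ)) ≤ C + ((η * (X a - μ)) / (η * R)) * Sh :=
        chord_exp (by positivity) (by nlinarith [hX0 a, hXR a]) (by nlinarith [hX0 a, hXR a])
      calc p a * Real.exp (η * X a) = p a * (E * Real.exp (η * (X a - μ))) := by rw [h1]
        _ ≤ p a * (E * (C + ((η * (X a - μ)) / (η * R)) * Sh)) := by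
            refine mul_le_mul_of_nonneg_left (mul_le_mul_of_nonneg_left h2 (Real.exp_pos _).le) (hp0 a)
        _ = E * C * p a + (E * Sh / R) * (p a * X a - μ * p a) := by
            field_simp
    calc ∑ a, p a * Real.exp (η * X a)
        ≤ ∑ a, (E * C * p a + (E * Sh / R) * (p a * X a - μ * p a)) :=
          Finset.sum_le_sum fun a _ => step a
      _ = E * C * (∑ a, p a) + (E * Sh / R) * ((∑ a, p a * X a) - μ * ∑ a, p a) := by
          rw [Finset.sum_add_distrib, ← Finset.mul_sum, ← Finset.mul_sum,
            Finset.sum_sub_distrib, ← Finset.mul_sum]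
      _ = E * C := by rw [hp1, ← hμ]; ring
  refine key.trans ?_
  calc E * C ≤ E * Real.exp ((η * R) ^ 2 / 2) :=
        mul_le_mul_of_nonneg_left (Real.cosh_le_exp_half_sq _) (Real.exp_pos _).le
    _ = Real.exp (η * μ + η ^ 2 * R ^ 2 / 2) := by rw [hE, ← Real.exp_add]; congr 1; ring

lemma wavg_le {ι : Type*} [Fintype ι] (w f : ι → ℝ) (M : ℝ) (hw0 : ∀ i, 0 ≤ w i)
    (hw1 : ∑ i, w i = 1) (hf : ∀ i, f i ≤ M) : ∑ i, w i * f i ≤ M := by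
  calc ∑ i, w i * f i ≤ ∑ i, w i * M :=
        Finset.sum_le_sum fun i _ => mul_le_mul_of_nonneg_left (hf i) (hw0 i)
    _ = M := by rw [← Finset.sum_mul, hw1, one_mul]

lemma le_wavg {ι : Type*} [Fintype ι] (w f : ι → ℝ) (m : ℝ) (hw0 : ∀ i, 0 ≤ w i)
    (hw1 : ∑ i, w i = 1) (hf : ∀ i, m ≤ f i) : m ≤ ∑ i, w i * f i := by
  calc m = ∑ i, w i * m := by rw [← Finset.sum_mul, hw1, one_mul]
    _ ≤ ∑ i, w i * f i :=
        Finset.sum_le_sum fun i _ => mul_le_mul_of_nonneg_left (hf i) (hw0 i)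

lemma h7_aux (τ L R k' X : ℝ) (hτ0 : 0 < τ) :
    (L + (X / τ + k' * (R ^ 2 / (2 * τ ^ 2)))) * τ =
      τ * L + X + k' * (R ^ 2 / (2 * τ)) := by
  field_simp
  ring

lemma halg_aux (τ L R c k' : ℝ) (hc0 : 0 < c) (hR : 0 < R)
    (hτR : τ = R / c) (hL2 : L = k' * c ^ 2 / 2) :
    τ * L + k' * (R ^ 2 / (2 * τ)) = k' * (R * c) := by
  rw [hτR, hL2]
  field_simp
  ring

set_option maxHeartbeats 3000000 in
/-- First half of the proof of Lemma 2: the value of any comparator policy exceeds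
the average value of the Politex iterates by at most the stated bound. -/
theorem stmt_13 {S A : Type*} [Fintype S] [Nonempty S] [Fintype A]
    (hA : 2 ≤ Fintype.card A)
    (P : S → A → S → ℝ) (hP0 : ∀ s a s', 0 ≤ P s a s') (hP1 : ∀ s a, ∑ s', P s a s' = 1)
    (r : S → A → ℝ) (hr : ∀ s a, 0 ≤ r s a ∧ r s a ≤ 1)
    (γ : ℝ) (hγ0 : 0 ≤ γ) (hγ1 : γ < 1)
    (k : ℕ) (hk : 1 ≤ k)
    (τ : ℝ) (hτ : τ = (1 / (1 - γ)) *
      Real.sqrt ((k : ℝ) / (2 * Real.log (Fintype.card A))))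
    (π : ℕ → S → A → ℝ) (v : ℕ → S → ℝ) (Q : ℕ → S → A → ℝ)
    (h0 : ∀ s a, π 0 s a = 1 / (Fintype.card A : ℝ))
    (hv : ∀ t s, v t s =
      (∑ a, π t s a * r s a) + γ * ∑ s', (∑ a, π t s a * P s a s') * v t s')
    (hQ : ∀ t s a, Q t s a = r s a + γ * ∑ s', P s a s' * v t s')
    (hrec : ∀ t s a, π (t + 1) s a =
      π t s a * Real.exp (Q t s a / τ) / (∑ b, π t s b * Real.exp (Q t s b / τ)))
    (πstar : S → A → ℝ) (hstar : ∀ s, (∀ a, 0 ≤ πstar s a) ∧ ∑ a, πstar s a = 1)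
    (vstar : S → ℝ)
    (hvstar : ∀ s, vstar s =
      (∑ a, πstar s a * r s a) + γ * ∑ s', (∑ a, πstar s a * P s a s') * vstar s') :
    ∀ s, vstar s - (1 / (k : ℝ)) * ∑ i ∈ Finset.range k, v i s ≤
      (1 / (1 - γ) ^ 2) * Real.sqrt (2 * Real.log (Fintype.card A) / (k : ℝ)) := by
  haveI hAne : Nonempty A := Fintype.card_pos_iff.mp (by omega)
  have hA1 : (1:ℝ) < (Fintype.card A : ℝ) := by exact_mod_cast lt_of_lt_of_le one_lt_two hA
  set L := Real.log (Fintype.card A) with hLdef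
  have hL : 0 < L := Real.log_pos hA1
  have hk0 : (0:ℝ) < (k : ℝ) := by exact_mod_cast hk
  have h1γ : 0 < 1 - γ := by linarith
  set R : ℝ := 1 / (1 - γ) with hRdef
  have hR : 0 < R := by positivity
  set c : ℝ := Real.sqrt (2 * L / k) with hcdef
  have hc0 : 0 < c := Real.sqrt_pos.mpr (by positivity)
  have hc2 : c ^ 2 = 2 * L / k := Real.sq_sqrt (by positivity)
  have hτR : τ = R / c := by
    rw [hτ, hRdef, hcdef,
      show (k:ℝ) / (2 * L) = (2 * L / k)⁻¹ by rw [inv_div],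
      Real.sqrt_inv, div_eq_mul_inv]
    ring
  have hτ0 : 0 < τ := by rw [hτR]; positivity
  clear_value L R c
  -- policy invariants
  have hπ : ∀ t s, (∀ a, 0 < π t s a) ∧ ∑ a, π t s a = 1 := by
    intro t
    induction t with
    | zero =>
      intro s
      refine ⟨fun a => by rw [h0]; positivity, ?_⟩
      simp only [h0, Finset.sum_const, Finset.card_univ, nsmul_eq_mul]
      field_simp
    | succ t ih =>
      intro s
      have hZ : 0 < ∑ b, π t s b * Real.exp (Q t s b / τ) :=
        Finset.sum_pos (fun b _ => mul_pos ((ih s).1 b) (Real.exp_pos _)) Finset.univ_nonempty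
      refine ⟨fun a => by rw [hrec]; exact div_pos (mul_pos ((ih s).1 a) (Real.exp_pos _)) hZ, ?_⟩
      have : ∑ a, π (t+1) s a =
          (∑ a, π t s a * Real.exp (Q t s a / τ)) / (∑ b, π t s b * Real.exp (Q t s b / τ)) := by
        simp only [hrec]; rw [← Finset.sum_div]
      rw [this, div_self hZ.ne']
  -- row-stochasticity
  have hrow : ∀ (w : A → ℝ), (∀ a, 0 ≤ w a) → (∑ a, w a = 1) → ∀ s,
      (∀ s', 0 ≤ ∑ a, w a * P s a s') ∧ ∑ s', ∑ a, w a * P s a s' = 1 := by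
    intro w hw0 hw1 s
    refine ⟨fun s' => Finset.sum_nonneg fun a _ => mul_nonneg (hw0 a) (hP0 s a s'), ?_⟩
    rw [Finset.sum_comm]
    calc ∑ a, ∑ s', w a * P s a s' = ∑ a, w a * ∑ s', P s a s' := by
          exact Finset.sum_congr rfl fun a _ => (Finset.mul_sum _ _ _).symm
      _ = 1 := by simp only [hP1, mul_one]; exact hw1
  -- value bounds
  have hv0 : ∀ t s, 0 ≤ v t s := by
    intro t s
    obtain ⟨s₀, -, hmin⟩ := Finset.exists_min_image Finset.univ (v t) Finset.univ_nonempty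
    have hmin' : ∀ s', v t s₀ ≤ v t s' := fun s' => hmin s' (Finset.mem_univ s')
    have hrw := hrow (π t s₀) (fun a => ((hπ t s₀).1 a).le) (hπ t s₀).2 s₀
    have h1 : v t s₀ ≤ ∑ s', (∑ a, π t s₀ a * P s₀ a s') * v t s' :=
      le_wavg _ (v t) _ hrw.1 hrw.2 hmin'
    have h2 : 0 ≤ ∑ a, π t s₀ a * r s₀ a :=
      Finset.sum_nonneg fun a _ => mul_nonneg ((hπ t s₀).1 a).le (hr s₀ a).1
    have h3 := hv t s₀
    nlinarith [hmin' s, mul_le_mul_of_nonneg_left h1 hγ0]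
  have hv1 : ∀ t s, v t s ≤ R := by
    intro t s
    obtain ⟨s₁, -, hmax⟩ := Finset.exists_max_image Finset.univ (v t) Finset.univ_nonempty
    have hmax' : ∀ s', v t s' ≤ v t s₁ := fun s' => hmax s' (Finset.mem_univ s')
    have hrw := hrow (π t s₁) (fun a => ((hπ t s₁).1 a).le) (hπ t s₁).2 s₁
    have h1 : ∑ s', (∑ a, π t s₁ a * P s₁ a s') * v t s' ≤ v t s₁ :=
      wavg_le _ (v t) _ hrw.1 hrw.2 hmax'
    have h2 : ∑ a, π t s₁ a * r s₁ a ≤ 1 :=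
      wavg_le _ (r s₁) 1 (fun a => ((hπ t s₁).1 a).le) (hπ t s₁).2 (fun a => (hr s₁ a).2)
    have h3 := hv t s₁
    have h4 : v t s₁ ≤ R := by
      have h5 : v t s₁ ≤ 1 + γ * v t s₁ := by
        nlinarith [mul_le_mul_of_nonneg_left h1 hγ0]
      rw [hRdef, le_div_iff₀ h1γ]; nlinarith
    exact (hmax' s).trans h4
  -- Q bounds
  have hQ0 : ∀ t s a, 0 ≤ Q t s a := by
    intro t s a
    rw [hQ]
    have : 0 ≤ ∑ s', P s a s' * v t s' :=
      Finset.sum_nonneg fun s' _ => mul_nonneg (hP0 s a s') (hv0 t s')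
    nlinarith [(hr s a).1]
  have hQR : ∀ t s a, Q t s a ≤ R := by
    intro t s a
    rw [hQ]
    have h1 : ∑ s', P s a s' * v t s' ≤ R :=
      wavg_le _ (v t) R (hP0 s a) (hP1 s a) (fun s' => hv1 t s')
    have h2 : 1 + γ * R = R := by rw [hRdef]; field_simp; ring
    nlinarith [(hr s a).2, mul_le_mul_of_nonneg_left h1 hγ0]
  -- Hedge regret per state
  have hedge : ∀ s, ∑ j ∈ Finset.range k,
      ((∑ a, πstar s a * Q j s a) - (∑ a, π j s a * Q j s a)) ≤ (k:ℝ) * (R * c) := by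
    intro s
    have hZpos : ∀ j, 0 < ∑ b, π j s b * Real.exp (Q j s b / τ) := fun j =>
      Finset.sum_pos (fun b _ => mul_pos ((hπ j s).1 b) (Real.exp_pos _)) Finset.univ_nonempty
    have hWpos : ∀ n, 0 < ∏ j ∈ Finset.range n, (∑ b, π j s b * Real.exp (Q j s b / τ)) :=
      fun n => Finset.prod_pos fun j _ => hZpos j
    have hprod : ∀ n a, π n s a * ∏ j ∈ Finset.range n, (∑ b, π j s b * Real.exp (Q j s b / τ)) =
        π 0 s a * Real.exp ((∑ j ∈ Finset.range n, Q j s a) / τ) := by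
      intro n
      induction n with
      | zero => intro a; simp
      | succ n ih =>
        intro a
        rw [Finset.prod_range_succ, Finset.sum_range_succ, hrec n s a, add_div, Real.exp_add,
          ← mul_assoc (π 0 s a), ← ih a,
          mul_comm (∏ j ∈ Finset.range n, (∑ b, π j s b * Real.exp (Q j s b / τ)))
            (∑ b, π n s b * Real.exp (Q n s b / τ)),
          ← mul_assoc, div_mul_cancel₀ _ (hZpos n).ne']
        ring
    have hπle1 : ∀ n a, π n s a ≤ 1 := by
      intro n a
      calc π n s a ≤ ∑ b, π n s b :=
            Finset.single_le_sum (fun b _ => ((hπ n s).1 b).le) (Finset.mem_univ a)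
        _ = 1 := (hπ n s).2
    have hSle : ∀ a, (∑ j ∈ Finset.range k, Q j s a) / τ ≤
        L + Real.log (∏ j ∈ Finset.range k, (∑ b, π j s b * Real.exp (Q j s b / τ))) := by
      intro a
      have h2 := hprod k a
      rw [h0 s a] at h2
      have hcard0 : (0:ℝ) < (Fintype.card A : ℝ) := by positivity
      have h3 : Real.exp ((∑ j ∈ Finset.range k, Q j s a) / τ) ≤
          (Fintype.card A : ℝ) * ∏ j ∈ Finset.range k, (∑ b, π j s b * Real.exp (Q j s b / τ)) := by
        have h4 : Real.exp ((∑ j ∈ Finset.range k, Q j s a) / τ) =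
            (Fintype.card A : ℝ) * (π k s a * ∏ j ∈ Finset.range k,
              (∑ b, π j s b * Real.exp (Q j s b / τ))) := by
          rw [h2]; field_simp
        rw [h4]
        have h5 : π k s a * ∏ j ∈ Finset.range k, (∑ b, π j s b * Real.exp (Q j s b / τ)) ≤
            ∏ j ∈ Finset.range k, (∑ b, π j s b * Real.exp (Q j s b / τ)) := by
          nlinarith [hπle1 k a, hWpos k, (hπ k s).1 a]
        exact mul_le_mul_of_nonneg_left h5 hcard0.le
      calc (∑ j ∈ Finset.range k, Q j s a) / τ
          = Real.log (Real.exp ((∑ j ∈ Finset.range k, Q j s a) / τ)) := (Real.log_exp _).symm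
        _ ≤ Real.log ((Fintype.card A : ℝ) *
              ∏ j ∈ Finset.range k, (∑ b, π j s b * Real.exp (Q j s b / τ))) := by
            exact Real.log_le_log (Real.exp_pos _) h3
        _ = L + Real.log (∏ j ∈ Finset.range k, (∑ b, π j s b * Real.exp (Q j s b / τ))) := by
            rw [Real.log_mul hcard0.ne' (hWpos k).ne', hLdef]
    have hlogW : Real.log (∏ j ∈ Finset.range k, (∑ b, π j s b * Real.exp (Q j s b / τ))) ≤
        ∑ j ∈ Finset.range k, ((∑ a, π j s a * Q j s a) / τ + R ^ 2 / (2 * τ ^ 2)) := by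
      rw [Real.log_prod (fun j _ => (hZpos j).ne')]
      refine Finset.sum_le_sum fun j _ => ?_
      have hm := mgf_bound (π j s) (Q j s) (fun a => ((hπ j s).1 a).le) (hπ j s).2 R τ⁻¹ hR
        (inv_pos.mpr hτ0) (hQ0 j s) (hQR j s)
      simp only [inv_mul_eq_div] at hm
      have he : (τ⁻¹) ^ 2 * R ^ 2 / 2 = R ^ 2 / (2 * τ ^ 2) := by
        field_simp
      rw [he] at hm
      exact hm
    -- comparator
    obtain ⟨astar, -, hamax⟩ := Finset.exists_max_image Finset.univ
      (fun a => ∑ j ∈ Finset.range k, Q j s a) Finset.univ_nonempty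
    have hamax' : ∀ a, ∑ j ∈ Finset.range k, Q j s a ≤ ∑ j ∈ Finset.range k, Q j s astar :=
      fun a => hamax a (Finset.mem_univ a)
    have hcomp : ∑ j ∈ Finset.range k, ∑ a, πstar s a * Q j s a ≤
        ∑ j ∈ Finset.range k, Q j s astar := by
      rw [Finset.sum_comm]
      calc ∑ a, ∑ j ∈ Finset.range k, πstar s a * Q j s a
          = ∑ a, πstar s a * ∑ j ∈ Finset.range k, Q j s a :=
            Finset.sum_congr rfl fun a _ => (Finset.mul_sum _ _ _).symm
        _ ≤ ∑ j ∈ Finset.range k, Q j s astar :=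
            wavg_le _ _ _ (fun a => (hstar s).1 a) (hstar s).2 hamax'
    have hfin : ∑ j ∈ Finset.range k, Q j s astar ≤
        τ * L + (∑ j ∈ Finset.range k, ∑ a, π j s a * Q j s a) + (k:ℝ) * (R ^ 2 / (2 * τ)) := by
      have h6 := (hSle astar).trans (by linarith [hlogW] :
        L + Real.log (∏ j ∈ Finset.range k, (∑ b, π j s b * Real.exp (Q j s b / τ))) ≤
        L + ∑ j ∈ Finset.range k, ((∑ a, π j s a * Q j s a) / τ + R ^ 2 / (2 * τ ^ 2)))
      rw [div_le_iff₀ hτ0] at h6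
      rw [Finset.sum_add_distrib, Finset.sum_const, Finset.card_range, nsmul_eq_mul] at h6
      rw [← Finset.sum_div, h7_aux τ L R (k:ℝ) _ hτ0] at h6
      exact h6
    have hL2 : L = (k:ℝ) * c ^ 2 / 2 := by rw [hc2]; field_simp
    have halg : τ * L + (k:ℝ) * (R ^ 2 / (2 * τ)) = (k:ℝ) * (R * c) :=
      halg_aux τ L R c (k:ℝ) hc0 hR hτR hL2
    rw [Finset.sum_sub_distrib]
    linarith [hcomp, hfin]
  -- performance difference
  have hgap : ∀ j s, vstar s - v j s =
      ((∑ a, πstar s a * Q j s a) - (∑ a, π j s a * Q j s a))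
        + γ * ∑ s', (∑ a, πstar s a * P s a s') * (vstar s' - v j s') := by
    intro j s
    have hswap : ∀ (w : A → ℝ), ∑ a, w a * Q j s a =
        (∑ a, w a * r s a) + γ * ∑ s', (∑ a, w a * P s a s') * v j s' := by
      intro w
      have e1 : ∀ a, w a * Q j s a =
          w a * r s a + γ * ∑ s', w a * P s a s' * v j s' := by
        intro a
        calc w a * Q j s a = w a * r s a + γ * (w a * ∑ s', P s a s' * v j s') := by
              rw [hQ]; ring
          _ = w a * r s a + γ * ∑ s', w a * P s a s' * v j s' := by
              rw [Finset.mul_sum]; simp only [mul_assoc]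
      rw [show (∑ a, w a * Q j s a) =
        ∑ a, (w a * r s a + γ * ∑ s', w a * P s a s' * v j s') from
        Finset.sum_congr rfl fun a _ => e1 a]
      rw [Finset.sum_add_distrib, ← Finset.mul_sum, Finset.sum_comm]
      congr 2
      exact Finset.sum_congr rfl fun s' _ => (Finset.sum_mul _ _ _).symm
    have h1 : v j s = ∑ a, π j s a * Q j s a := by rw [hswap, ← hv]
    have h2 := hswap (πstar s)
    have h3 : ∑ s', (∑ a, πstar s a * P s a s') * (vstar s' - v j s') =
        (∑ s', (∑ a, πstar s a * P s a s') * vstar s')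
          - ∑ s', (∑ a, πstar s a * P s a s') * v j s' := by
      rw [← Finset.sum_sub_distrib]
      exact Finset.sum_congr rfl fun s' _ => mul_sub _ _ _
    rw [hvstar s, h1, h2, h3]
    ring
  -- averaging and contraction
  have e0 : ∀ s, (1/(k:ℝ)) * ∑ j ∈ Finset.range k, (vstar s - v j s) =
      vstar s - (1/(k:ℝ)) * ∑ i ∈ Finset.range k, v i s := by
    intro s
    rw [Finset.sum_sub_distrib, Finset.sum_const, Finset.card_range, nsmul_eq_mul]
    field_simp
  have hD : ∀ s, vstar s - (1/(k:ℝ)) * ∑ i ∈ Finset.range k, v i s ≤ R * R * c := by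
    obtain ⟨s₁, -, hmax⟩ := Finset.exists_max_image Finset.univ
      (fun s => vstar s - (1/(k:ℝ)) * ∑ i ∈ Finset.range k, v i s) Finset.univ_nonempty
    have hmax' : ∀ s', vstar s' - (1/(k:ℝ)) * ∑ i ∈ Finset.range k, v i s' ≤
        vstar s₁ - (1/(k:ℝ)) * ∑ i ∈ Finset.range k, v i s₁ :=
      fun s' => hmax s' (Finset.mem_univ s')
    have hrw := hrow (πstar s₁) (fun a => (hstar s₁).1 a) (hstar s₁).2 s₁
    have hkey : vstar s₁ - (1/(k:ℝ)) * ∑ i ∈ Finset.range k, v i s₁ ≤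
        R * c + γ * (vstar s₁ - (1/(k:ℝ)) * ∑ i ∈ Finset.range k, v i s₁) := by
      have step1 : vstar s₁ - (1/(k:ℝ)) * ∑ i ∈ Finset.range k, v i s₁ =
          (1/(k:ℝ)) * ∑ j ∈ Finset.range k,
            (((∑ a, πstar s₁ a * Q j s₁ a) - (∑ a, π j s₁ a * Q j s₁ a))
              + γ * ∑ s', (∑ a, πstar s₁ a * P s₁ a s') * (vstar s' - v j s')) := by
        rw [← e0 s₁]
        congr 1
        exact Finset.sum_congr rfl fun j _ => hgap j s₁
      have step2 : ∑ j ∈ Finset.range k,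
            (((∑ a, πstar s₁ a * Q j s₁ a) - (∑ a, π j s₁ a * Q j s₁ a))
              + γ * ∑ s', (∑ a, πstar s₁ a * P s₁ a s') * (vstar s' - v j s')) =
          (∑ j ∈ Finset.range k,
            ((∑ a, πstar s₁ a * Q j s₁ a) - (∑ a, π j s₁ a * Q j s₁ a)))
          + γ * ∑ s', (∑ a, πstar s₁ a * P s₁ a s') *
              ∑ j ∈ Finset.range k, (vstar s' - v j s') := by
        rw [Finset.sum_add_distrib, ← Finset.mul_sum, Finset.sum_comm]
        congr 2
        exact Finset.sum_congr rfl fun s' _ => (Finset.mul_sum _ _ _).symm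
      conv_lhs => rw [step1, step2]
      rw [mul_add]
      have b1 : (1/(k:ℝ)) * ∑ j ∈ Finset.range k,
          ((∑ a, πstar s₁ a * Q j s₁ a) - (∑ a, π j s₁ a * Q j s₁ a)) ≤ R * c := by
        have := hedge s₁
        calc (1/(k:ℝ)) * ∑ j ∈ Finset.range k,
            ((∑ a, πstar s₁ a * Q j s₁ a) - (∑ a, π j s₁ a * Q j s₁ a))
            ≤ (1/(k:ℝ)) * ((k:ℝ) * (R * c)) := by
              exact mul_le_mul_of_nonneg_left this (by positivity)
          _ = R * c := by field_simp
      have b2 : (1/(k:ℝ)) * (γ * ∑ s', (∑ a, πstar s₁ a * P s₁ a s') *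
            ∑ j ∈ Finset.range k, (vstar s' - v j s')) ≤
          γ * (vstar s₁ - (1/(k:ℝ)) * ∑ i ∈ Finset.range k, v i s₁) := by
        have e2 : (1/(k:ℝ)) * (γ * ∑ s', (∑ a, πstar s₁ a * P s₁ a s') *
              ∑ j ∈ Finset.range k, (vstar s' - v j s')) =
            γ * ∑ s', (∑ a, πstar s₁ a * P s₁ a s') *
              ((1/(k:ℝ)) * ∑ j ∈ Finset.range k, (vstar s' - v j s')) := by
          simp only [Finset.mul_sum]
          refine Finset.sum_congr rfl fun s' _ => ?_
          refine Finset.sum_congr rfl fun j _ => ?_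
          ring
        rw [e2]
        refine mul_le_mul_of_nonneg_left ?_ hγ0
        refine wavg_le _ _ _ hrw.1 hrw.2 fun s' => ?_
        rw [e0 s']
        exact hmax' s'
      linarith [b1, b2]
    intro s
    refine (hmax' s).trans ?_
    have hRc : R * c = (1 - γ) * (R * R * c) := by
      rw [hRdef]; field_simp
    set D := vstar s₁ - (1/(k:ℝ)) * ∑ i ∈ Finset.range k, v i s₁ with hDdef
    have h9 : (1 - γ) * D ≤ (1 - γ) * (R * R * c) := by linarith [hkey, hRc]
    exact le_of_mul_le_mul_left h9 h1γ
  intro s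
  have hRHS : (1 / (1 - γ) ^ 2) * c = R * R * c := by
    rw [hRdef]
    field_simp
  rw [hRHS]
  exact hD s
end

section
/- Consider a finite discounted MDP with 2 ≤ |A| and rewards satisfying 0 ≤ r s a ≤ 1 for all s, a, and let v* : S → ℝ satisfy the Bellman optimality equation v* s = max_a (r s a + γ * ∑_{s'} P s a s' * v* s') for all s. Let k ≥ 1, set τ = (1/(1 − γ)) * Real.sqrt (k / (2 * Real.log |A|)), and let π_0, ..., π_{k-1} be the Politex iterates with parameter τ, with value functions v_0, ..., v_{k-1}. Then for every state s, v* s − v_{k-1} s ≤ (1/(1 − γ)^2) * Real.sqrt (2 * Real.log |A| / k). (This is the paper's Lemma 2, the Politex convergence bound.) -/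
open Finset

/-- Jensen for exp over a finite probability vector. -/
lemma aux_exp_jensen {A : Type*} [Fintype A] (p f : A → ℝ) (hp0 : ∀ a, 0 ≤ p a)
    (hp1 : ∑ a, p a = 1) :
    Real.exp (∑ a, p a * f a) ≤ ∑ a, p a * Real.exp (f a) := by
  have := convexOn_exp.map_sum_le (t := univ) (w := p) (p := f)
    (fun i _ => hp0 i) hp1 (fun i _ => Set.mem_univ _)
  simpa [smul_eq_mul] using this

/-- MGF bound with constant 1/2 (weak Hoeffding). -/
lemma aux_mgf {A : Type*} [Fintype A] (p f : A → ℝ) (hp0 : ∀ a, 0 ≤ p a)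
    (hp1 : ∑ a, p a = 1) (c : ℝ) (hf : ∀ a, 0 ≤ f a ∧ f a ≤ c) :
    Real.log (∑ a, p a * Real.exp (f a)) ≤ (∑ a, p a * f a) + c ^ 2 / 2 := by
  set Z := ∑ a, p a * Real.exp (f a) with hZdef
  have hZ1 : 1 ≤ Z := by
    calc (1 : ℝ) = ∑ a, p a * 1 := by simp [hp1]
    _ ≤ Z := by
      apply Finset.sum_le_sum
      intro a _
      exact mul_le_mul_of_nonneg_left (Real.one_le_exp (hf a).1) (hp0 a)
  have hZ0 : 0 < Z := lt_of_lt_of_le one_pos hZ1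
  rw [Real.log_le_iff_le_exp hZ0, Real.exp_add]
  set X := ∑ a, p a * f a with hXdef
  suffices main : Z * Real.exp (-X) ≤ Real.exp (c ^ 2 / 2) by
    have h2 := mul_le_mul_of_nonneg_right main (le_of_lt (Real.exp_pos X))
    calc Z = Z * Real.exp (-X) * Real.exp X := by
            rw [mul_assoc, ← Real.exp_add]; simp
    _ ≤ Real.exp (c ^ 2 / 2) * Real.exp X := h2
    _ = Real.exp X * Real.exp (c ^ 2 / 2) := by ring
  have hjen : Real.exp (-X) ≤ ∑ a, p a * Real.exp (-(f a)) := by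
    have := aux_exp_jensen p (fun a => -(f a)) hp0 hp1
    simpa [hXdef, mul_neg, ← Finset.sum_neg_distrib] using this
  have step1 : Z * Real.exp (-X) ≤ Z * ∑ a, p a * Real.exp (-(f a)) :=
    mul_le_mul_of_nonneg_left hjen (le_of_lt hZ0)
  have step2 : Z * (∑ a, p a * Real.exp (-(f a)))
      = ∑ a, ∑ b, p a * p b * Real.exp (f a - f b) := by
    rw [hZdef, Finset.sum_mul_sum]
    refine Finset.sum_congr rfl fun a _ => Finset.sum_congr rfl fun b _ => ?_
    rw [show f a - f b = f a + -(f b) by ring, Real.exp_add]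
    ring
  set D := ∑ a, ∑ b, p a * p b * Real.exp (f a - f b) with hDdef
  have hswap : D = ∑ a, ∑ b, p a * p b * Real.exp (f b - f a) := by
    rw [hDdef, Finset.sum_comm]
    refine Finset.sum_congr rfl fun a _ => Finset.sum_congr rfl fun b _ => by ring_nf
  have hDD : D + D ≤ 2 * Real.exp (c ^ 2 / 2) := by
    have : D + D = ∑ a, ∑ b, p a * p b *
        (Real.exp (f a - f b) + Real.exp (f b - f a)) := by
      nth_rewrite 2 [hswap]
      rw [hDdef, ← Finset.sum_add_distrib]
      refine Finset.sum_congr rfl fun a _ => ?_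
      rw [← Finset.sum_add_distrib]
      exact Finset.sum_congr rfl fun b _ => by ring
    rw [this]
    calc ∑ a, ∑ b, p a * p b * (Real.exp (f a - f b) + Real.exp (f b - f a))
        ≤ ∑ a, ∑ b, p a * p b * (2 * Real.exp (c ^ 2 / 2)) := by
          refine Finset.sum_le_sum fun a _ => Finset.sum_le_sum fun b _ => ?_
          apply mul_le_mul_of_nonneg_left _ (mul_nonneg (hp0 a) (hp0 b))
          have hch : Real.exp (f a - f b) + Real.exp (f b - f a)
              = 2 * Real.cosh (f a - f b) := by
            rw [Real.cosh_eq, show f b - f a = -(f a - f b) by ring]; ring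
          have hle : Real.cosh (f a - f b) ≤ Real.exp ((f a - f b) ^ 2 / 2) :=
            Real.cosh_le_exp_half_sq _
          have hsq : (f a - f b) ^ 2 ≤ c ^ 2 := by
            have h1 := hf a; have h2 := hf b
            apply sq_le_sq' <;> nlinarith [h1.1, h1.2, h2.1, h2.2]
          have : Real.exp ((f a - f b) ^ 2 / 2) ≤ Real.exp (c ^ 2 / 2) :=
            Real.exp_le_exp.mpr (by linarith)
          rw [hch]
          nlinarith [Real.cosh_pos (f a - f b)]
      _ = 2 * Real.exp (c ^ 2 / 2) := by
          have h1 : ∀ E : ℝ, (∑ b : A, p b * E) = E := by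
            intro E; rw [← Finset.sum_mul, hp1, one_mul]
          have h2 : ∀ a : A, (∑ b : A, p a * p b * (2 * Real.exp (c ^ 2 / 2)))
              = p a * (2 * Real.exp (c ^ 2 / 2)) := by
            intro a
            rw [show (∑ b : A, p a * p b * (2 * Real.exp (c ^ 2 / 2)))
              = p a * ∑ b : A, p b * (2 * Real.exp (c ^ 2 / 2)) by
                rw [Finset.mul_sum]; exact Finset.sum_congr rfl fun b _ => by ring]
            rw [h1]
          rw [Finset.sum_congr rfl fun a _ => h2 a, h1]
  linarith [step1, step2 ▸ step1]

/-- Weighted Chebyshev: tilting towards larger values increases the mean. -/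
lemma aux_chebyshev {A : Type*} [Fintype A] (p f g : A → ℝ) (hp0 : ∀ a, 0 ≤ p a)
    (hp1 : ∑ a, p a = 1) (hmono : ∀ a b, 0 ≤ (f a - f b) * (g a - g b)) :
    (∑ a, p a * f a) * (∑ a, p a * g a) ≤ ∑ a, p a * (f a * g a) := by
  have key : 0 ≤ ∑ a, ∑ b, p a * p b * ((f a - f b) * (g a - g b)) :=
    Finset.sum_nonneg fun a _ => Finset.sum_nonneg fun b _ =>
      mul_nonneg (mul_nonneg (hp0 a) (hp0 b)) (hmono a b)
  have h1 : ∀ E : ℝ, (∑ b : A, p b * E) = E := by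
    intro E; rw [← Finset.sum_mul, hp1, one_mul]
  have hT1 : (∑ a : A, ∑ b : A, p a * p b * (f a * g a)) = ∑ a, p a * (f a * g a) := by
    refine Finset.sum_congr rfl fun a _ => ?_
    rw [show (∑ b : A, p a * p b * (f a * g a))
        = ∑ b : A, p b * (p a * (f a * g a)) from
        Finset.sum_congr rfl fun b _ => by ring, h1]
  have hT2 : (∑ a : A, ∑ b : A, p a * p b * (f b * g b)) = ∑ a, p a * (f a * g a) := by
    rw [Finset.sum_comm]
    refine Finset.sum_congr rfl fun b _ => ?_
    rw [show (∑ a : A, p a * p b * (f b * g b))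
        = ∑ a : A, p a * (p b * (f b * g b)) from
        Finset.sum_congr rfl fun a _ => by ring, h1]
  have hT3 : (∑ a : A, ∑ b : A, p a * p b * (f a * g b))
      = (∑ a, p a * f a) * (∑ a, p a * g a) := by
    rw [Finset.sum_mul_sum]
    exact Finset.sum_congr rfl fun a _ => Finset.sum_congr rfl fun b _ => by ring
  have hT4 : (∑ a : A, ∑ b : A, p a * p b * (f b * g a))
      = (∑ a, p a * f a) * (∑ a, p a * g a) := by
    rw [Finset.sum_comm, Finset.sum_mul_sum]
    exact Finset.sum_congr rfl fun b _ => Finset.sum_congr rfl fun a _ => by ring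
  have expand : (∑ a : A, ∑ b : A, p a * p b * ((f a - f b) * (g a - g b)))
      = (∑ a : A, ∑ b : A, p a * p b * (f a * g a))
      + (∑ a : A, ∑ b : A, p a * p b * (f b * g b))
      - (∑ a : A, ∑ b : A, p a * p b * (f a * g b))
      - (∑ a : A, ∑ b : A, p a * p b * (f b * g a)) := by
    simp only [← Finset.sum_add_distrib, ← Finset.sum_sub_distrib]
    exact Finset.sum_congr rfl fun a _ => Finset.sum_congr rfl fun b _ => by ring
  rw [expand, hT1, hT2, hT3, hT4] at key
  linarith

/-- Fixed-point upper bound for discounted Bellman-type recursions. -/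
lemma aux_fp_le {S : Type*} [Fintype S] [Nonempty S] (p : S → S → ℝ)
    (hp0 : ∀ s s', 0 ≤ p s s') (hp1 : ∀ s, ∑ s', p s s' = 1)
    (γ : ℝ) (hγ0 : 0 ≤ γ) (hγ1 : γ < 1) (c w : S → ℝ)
    (hw : ∀ s, w s = c s + γ * ∑ s', p s s' * w s')
    (m : ℝ) (hc : ∀ s, c s ≤ m) : ∀ s, w s ≤ m / (1 - γ) := by
  obtain ⟨s0, -, hs0⟩ := Finset.exists_mem_eq_sup' Finset.univ_nonempty w
  have hM : ∀ s, w s ≤ w s0 := fun s => by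
    rw [← hs0]; exact Finset.le_sup' w (Finset.mem_univ s)
  have hrec : w s0 ≤ m + γ * w s0 := by
    have hws0 := hw s0
    have hsum : (∑ s', p s0 s' * w s') ≤ w s0 := by
      calc (∑ s', p s0 s' * w s') ≤ ∑ s', p s0 s' * w s0 :=
            Finset.sum_le_sum fun s' _ =>
              mul_le_mul_of_nonneg_left (hM s') (hp0 s0 s')
      _ = w s0 := by rw [← Finset.sum_mul, hp1, one_mul]
    have := mul_le_mul_of_nonneg_left hsum hγ0
    linarith [hc s0, hws0]
  have hfin : w s0 ≤ m / (1 - γ) := by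
    rw [le_div_iff₀ (by linarith : (0:ℝ) < 1 - γ)]
    nlinarith
  exact fun s => (hM s).trans hfin

/-- Fixed-point nonnegativity. -/
lemma aux_fp_nonneg {S : Type*} [Fintype S] [Nonempty S] (p : S → S → ℝ)
    (hp0 : ∀ s s', 0 ≤ p s s') (hp1 : ∀ s, ∑ s', p s s' = 1)
    (γ : ℝ) (hγ0 : 0 ≤ γ) (hγ1 : γ < 1) (c w : S → ℝ)
    (hw : ∀ s, w s = c s + γ * ∑ s', p s s' * w s')
    (hc : ∀ s, 0 ≤ c s) : ∀ s, 0 ≤ w s := by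
  intro s
  have := aux_fp_le p hp0 hp1 γ hγ0 hγ1 (fun s => -c s) (fun s => -w s)
    (fun s => by
      have := hw s
      have hneg : (∑ s', p s s' * -w s') = -∑ s', p s s' * w s' := by
        rw [← Finset.sum_neg_distrib]
        exact Finset.sum_congr rfl fun s' _ => by ring
      rw [hneg]; linear_combination -this)
    0 (fun s => by simpa using hc s) s
  have h0 : -w s ≤ 0 := by simpa using this
  linarith

/-- Exponential weights regret bound. -/
lemma aux_regret {A : Type*} [Fintype A] [Nonempty A]
    (τ : ℝ) (hτ : 0 < τ) (M : ℝ) (p q : ℕ → A → ℝ)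
    (h0 : ∀ a, p 0 a = 1 / (Fintype.card A : ℝ))
    (hq : ∀ t a, 0 ≤ q t a ∧ q t a ≤ M)
    (hrec : ∀ t a, p (t + 1) a = p t a * Real.exp (q t a / τ) /
        (∑ b, p t b * Real.exp (q t b / τ)))
    (k : ℕ) (a0 : A) :
    ∑ t ∈ Finset.range k, q t a0 ≤ (∑ t ∈ Finset.range k, ∑ a, p t a * q t a)
      + τ * Real.log (Fintype.card A) + k * (M ^ 2 / (2 * τ)) := by
  have cardpos : (0 : ℝ) < (Fintype.card A : ℝ) := by
    exact_mod_cast Fintype.card_pos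
  set Z : ℕ → ℝ := fun t => ∑ b, p t b * Real.exp (q t b / τ) with hZdef
  have hprob : ∀ t, (∀ a, 0 ≤ p t a) ∧ (∑ a, p t a = 1) := by
    intro t
    induction t with
    | zero =>
      constructor
      · intro a; rw [h0]; positivity
      · have hsc : ∑ a : A, p 0 a = ∑ _a : A, (1 / (Fintype.card A : ℝ)) :=
          Finset.sum_congr rfl fun a _ => h0 a
        rw [hsc, Finset.sum_const, Finset.card_univ, nsmul_eq_mul]
        field_simp
    | succ t ih =>
      have hZ1 : 1 ≤ Z t := by
        calc (1:ℝ) = ∑ b, p t b * 1 := by simp [ih.2]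
        _ ≤ Z t := Finset.sum_le_sum fun b _ =>
            mul_le_mul_of_nonneg_left
              (Real.one_le_exp (div_nonneg (hq t b).1 (le_of_lt hτ))) (ih.1 b)
      have hZ0 : (0:ℝ) < Z t := lt_of_lt_of_le one_pos hZ1
      constructor
      · intro a
        rw [hrec t a]
        exact div_nonneg (mul_nonneg (ih.1 a) (Real.exp_pos _).le) hZ0.le
      · have : ∑ a, p (t+1) a = (∑ a, p t a * Real.exp (q t a / τ)) / Z t := by
          rw [Finset.sum_div]
          exact Finset.sum_congr rfl fun a _ => hrec t a
        rw [this, hZdef]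
        exact div_self (ne_of_gt hZ0)
  have hZ1 : ∀ t, 1 ≤ Z t := by
    intro t
    calc (1:ℝ) = ∑ b, p t b * 1 := by simp [(hprob t).2]
    _ ≤ Z t := Finset.sum_le_sum fun b _ =>
        mul_le_mul_of_nonneg_left
          (Real.one_le_exp (div_nonneg (hq t b).1 (le_of_lt hτ))) ((hprob t).1 b)
  have hZ0 : ∀ t, (0:ℝ) < Z t := fun t => lt_of_lt_of_le one_pos (hZ1 t)
  have prodform : ∀ t a, p t a * ∏ i ∈ Finset.range t, Z i
      = (1 / (Fintype.card A : ℝ)) * Real.exp ((∑ i ∈ Finset.range t, q i a) / τ) := by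
    intro t a
    induction t with
    | zero => simp [h0]
    | succ t ih =>
      rw [Finset.prod_range_succ, Finset.sum_range_succ]
      calc p (t+1) a * ((∏ i ∈ Finset.range t, Z i) * Z t)
          = (p t a * Real.exp (q t a / τ) / Z t) * ((∏ i ∈ Finset.range t, Z i) * Z t) := by
            rw [hrec t a]
        _ = (p t a * ∏ i ∈ Finset.range t, Z i) * Real.exp (q t a / τ) := by
            field_simp [ne_of_gt (hZ0 t)]
        _ = ((1 / (Fintype.card A : ℝ)) * Real.exp ((∑ i ∈ Finset.range t, q i a) / τ))
              * Real.exp (q t a / τ) := by rw [ih]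
        _ = (1 / (Fintype.card A : ℝ))
              * Real.exp (((∑ i ∈ Finset.range t, q i a) + q t a) / τ) := by
            rw [add_div, Real.exp_add]; ring
  have hple : p k a0 ≤ 1 := by
    have := Finset.single_le_sum (f := p k) (fun a _ => (hprob k).1 a) (Finset.mem_univ a0)
    rw [(hprob k).2] at this
    exact this
  have hC1 : (1:ℝ) ≤ ∏ i ∈ Finset.range k, Z i := by
    have := Finset.prod_le_prod (f := fun _ => (1:ℝ)) (g := Z)
      (s := Finset.range k) (fun i _ => zero_le_one) (fun i _ => hZ1 i)
    simpa using this
  have hC0 : (0:ℝ) < ∏ i ∈ Finset.range k, Z i := lt_of_lt_of_le one_pos hC1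
  have key : (1 / (Fintype.card A : ℝ))
      * Real.exp ((∑ i ∈ Finset.range k, q i a0) / τ) ≤ ∏ i ∈ Finset.range k, Z i := by
    rw [← prodform k a0]
    calc p k a0 * ∏ i ∈ Finset.range k, Z i ≤ 1 * ∏ i ∈ Finset.range k, Z i :=
        mul_le_mul_of_nonneg_right hple hC0.le
    _ = ∏ i ∈ Finset.range k, Z i := one_mul _
  have hlog := Real.log_le_log (by positivity) key
  rw [Real.log_mul (by positivity) (Real.exp_ne_zero _), Real.log_exp,
    one_div, Real.log_inv] at hlog
  have hlogC : Real.log (∏ i ∈ Finset.range k, Z i) = ∑ i ∈ Finset.range k, Real.log (Z i) :=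
    Real.log_prod fun i _ => ne_of_gt (hZ0 i)
  have hstep : ∀ i, Real.log (Z i) ≤ (∑ a, p i a * q i a) / τ + (M / τ) ^ 2 / 2 := by
    intro i
    have := aux_mgf (p i) (fun a => q i a / τ) (hprob i).1 (hprob i).2 (M / τ)
      (fun a => ⟨div_nonneg (hq i a).1 hτ.le, by
        exact div_le_div_of_nonneg_right (hq i a).2 hτ.le⟩)
    calc Real.log (Z i) ≤ (∑ a, p i a * (q i a / τ)) + (M / τ) ^ 2 / 2 := this
    _ = (∑ a, p i a * q i a) / τ + (M / τ) ^ 2 / 2 := by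
        rw [Finset.sum_div]
        congr 1
        exact Finset.sum_congr rfl fun a _ => by ring
  have hsum : Real.log (∏ i ∈ Finset.range k, Z i)
      ≤ (∑ i ∈ Finset.range k, ∑ a, p i a * q i a) / τ + k * ((M / τ) ^ 2 / 2) := by
    rw [hlogC]
    calc ∑ i ∈ Finset.range k, Real.log (Z i)
        ≤ ∑ i ∈ Finset.range k, ((∑ a, p i a * q i a) / τ + (M / τ) ^ 2 / 2) :=
          Finset.sum_le_sum fun i _ => hstep i
      _ = (∑ i ∈ Finset.range k, ∑ a, p i a * q i a) / τ + k * ((M / τ) ^ 2 / 2) := by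
          rw [Finset.sum_add_distrib, ← Finset.sum_div, Finset.sum_const, Finset.card_range,
            nsmul_eq_mul]
  have hfinal : -(Real.log (Fintype.card A : ℝ)) + (∑ i ∈ Finset.range k, q i a0) / τ
      ≤ (∑ i ∈ Finset.range k, ∑ a, p i a * q i a) / τ + k * ((M / τ) ^ 2 / 2) :=
    le_trans hlog hsum
  have hτne : τ ≠ 0 := ne_of_gt hτ
  have hmul := mul_le_mul_of_nonneg_right hfinal hτ.le
  have lhseq : (-(Real.log (Fintype.card A : ℝ)) + (∑ i ∈ Finset.range k, q i a0) / τ) * τ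
      = -(Real.log (Fintype.card A : ℝ)) * τ + (∑ i ∈ Finset.range k, q i a0) := by
    rw [add_mul, div_mul_cancel₀ _ hτne]
  have rhseq : ((∑ i ∈ Finset.range k, ∑ a, p i a * q i a) / τ
        + (k : ℝ) * ((M / τ) ^ 2 / 2)) * τ
      = (∑ i ∈ Finset.range k, ∑ a, p i a * q i a) + (k : ℝ) * (M ^ 2 / (2 * τ)) := by
    rw [add_mul, div_mul_cancel₀ _ hτne]
    congr 1
    field_simp
  rw [lhseq, rhseq] at hmul
  linarith

/-- Lemma 2 of the paper: the Politex convergence bound. -/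
theorem stmt_14 {S A : Type*} [Fintype S] [Nonempty S] [Fintype A] [Nonempty A]
    (hA : 2 ≤ Fintype.card A)
    (P : S → A → S → ℝ) (hP0 : ∀ s a s', 0 ≤ P s a s') (hP1 : ∀ s a, ∑ s', P s a s' = 1)
    (r : S → A → ℝ) (hr : ∀ s a, 0 ≤ r s a ∧ r s a ≤ 1)
    (γ : ℝ) (hγ0 : 0 ≤ γ) (hγ1 : γ < 1)
    (vstar : S → ℝ)
    (hvstar : ∀ s, vstar s = Finset.univ.sup' Finset.univ_nonempty
      (fun a => r s a + γ * ∑ s', P s a s' * vstar s'))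
    (k : ℕ) (hk : 1 ≤ k)
    (τ : ℝ) (hτ : τ = (1 / (1 - γ)) *
      Real.sqrt ((k : ℝ) / (2 * Real.log (Fintype.card A))))
    (π : ℕ → S → A → ℝ) (v : ℕ → S → ℝ) (Q : ℕ → S → A → ℝ)
    (h0 : ∀ s a, π 0 s a = 1 / (Fintype.card A : ℝ))
    (hv : ∀ t s, v t s =
      (∑ a, π t s a * r s a) + γ * ∑ s', (∑ a, π t s a * P s a s') * v t s')
    (hQ : ∀ t s a, Q t s a = r s a + γ * ∑ s', P s a s' * v t s')
    (hrec : ∀ t s a, π (t + 1) s a =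
      π t s a * Real.exp (Q t s a / τ) / (∑ b, π t s b * Real.exp (Q t s b / τ))) :
    ∀ s, vstar s - v (k - 1) s ≤
      (1 / (1 - γ) ^ 2) * Real.sqrt (2 * Real.log (Fintype.card A) / (k : ℝ)) := by
  have hγpos : (0:ℝ) < 1 - γ := by linarith
  have hcard1 : (1:ℝ) < (Fintype.card A : ℝ) := by exact_mod_cast hA
  set L : ℝ := Real.log (Fintype.card A : ℝ) with hLdef
  have hLpos : 0 < L := Real.log_pos hcard1
  have hkpos : (0:ℝ) < (k:ℝ) := by exact_mod_cast hk
  have hτpos : 0 < τ := by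
    rw [hτ]
    exact mul_pos (by positivity) (Real.sqrt_pos.mpr (by positivity))
  set M : ℝ := 1 / (1 - γ) with hMdef
  have hMγ : 1 + γ * M = M := by rw [hMdef]; field_simp; ring
  -- Q-value bounds, assuming probability invariant at time t
  have hQb : ∀ t, ((∀ s a, 0 ≤ π t s a) ∧ (∀ s, ∑ a, π t s a = 1)) →
      ∀ s a, 0 ≤ Q t s a ∧ Q t s a ≤ M := by
    intro t ht
    have hp0 : ∀ s s', 0 ≤ ∑ a, π t s a * P s a s' := fun s s' =>
      Finset.sum_nonneg fun a _ => mul_nonneg (ht.1 s a) (hP0 s a s')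
    have hp1 : ∀ s : S, ∑ s', ∑ a, π t s a * P s a s' = 1 := by
      intro s
      rw [Finset.sum_comm]
      calc ∑ a : A, ∑ s', π t s a * P s a s'
          = ∑ a : A, π t s a * ∑ s', P s a s' :=
            Finset.sum_congr rfl fun a _ => (Finset.mul_sum _ _ _).symm
        _ = 1 := by
            rw [show (∑ a : A, π t s a * ∑ s', P s a s') = ∑ a : A, π t s a from
              Finset.sum_congr rfl fun a _ => by rw [hP1 s a, mul_one]]
            exact ht.2 s
    have hcub : ∀ s, (∑ a, π t s a * r s a) ≤ 1 := by
      intro s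
      calc (∑ a, π t s a * r s a) ≤ ∑ a, π t s a :=
          Finset.sum_le_sum fun a _ =>
            mul_le_of_le_one_right (ht.1 s a) (hr s a).2
      _ = 1 := ht.2 s
    have hclb : ∀ s, 0 ≤ ∑ a, π t s a * r s a := fun s =>
      Finset.sum_nonneg fun a _ => mul_nonneg (ht.1 s a) (hr s a).1
    have hvub : ∀ s, v t s ≤ M := by
      have := aux_fp_le (fun s s' => ∑ a, π t s a * P s a s') hp0 hp1 γ hγ0 hγ1
        (fun s => ∑ a, π t s a * r s a) (v t) (hv t) 1 hcub
      intro s; rw [hMdef]; simpa using this s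
    have hvlb : ∀ s, 0 ≤ v t s :=
      aux_fp_nonneg (fun s s' => ∑ a, π t s a * P s a s') hp0 hp1 γ hγ0 hγ1
        (fun s => ∑ a, π t s a * r s a) (v t) (hv t) hclb
    intro s a
    constructor
    · rw [hQ t s a]
      exact add_nonneg (hr s a).1 (mul_nonneg hγ0 (Finset.sum_nonneg
        fun s' _ => mul_nonneg (hP0 s a s') (hvlb s')))
    · rw [hQ t s a]
      have hsv : (∑ s', P s a s' * v t s') ≤ M := by
        calc (∑ s', P s a s' * v t s') ≤ ∑ s', P s a s' * M :=
            Finset.sum_le_sum fun s' _ =>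
              mul_le_mul_of_nonneg_left (hvub s') (hP0 s a s')
        _ = M := by rw [← Finset.sum_mul, hP1, one_mul]
      have := mul_le_mul_of_nonneg_left hsv hγ0
      linarith [(hr s a).2, hMγ]
  -- probability invariant
  have hprob : ∀ t, (∀ s a, 0 ≤ π t s a) ∧ (∀ s, ∑ a, π t s a = 1) := by
    intro t
    induction t with
    | zero =>
      constructor
      · intro s a; rw [h0]; positivity
      · intro s
        have hsc : ∑ a : A, π 0 s a = ∑ _a : A, (1 / (Fintype.card A : ℝ)) :=
          Finset.sum_congr rfl fun a _ => h0 s a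
        rw [hsc, Finset.sum_const, Finset.card_univ, nsmul_eq_mul]
        field_simp
    | succ t ih =>
      have hQt := hQb t ih
      have hZ1 : ∀ s, 1 ≤ ∑ b, π t s b * Real.exp (Q t s b / τ) := by
        intro s
        calc (1:ℝ) = ∑ b, π t s b := (ih.2 s).symm
        _ ≤ _ := Finset.sum_le_sum fun b _ =>
            le_mul_of_one_le_right (ih.1 s b)
              (Real.one_le_exp (div_nonneg (hQt s b).1 hτpos.le))
      have hZ0 : ∀ s, (0:ℝ) < ∑ b, π t s b * Real.exp (Q t s b / τ) :=
        fun s => lt_of_lt_of_le one_pos (hZ1 s)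
      constructor
      · intro s a
        rw [hrec t s a]
        exact div_nonneg (mul_nonneg (ih.1 s a) (Real.exp_pos _).le) (hZ0 s).le
      · intro s
        have : ∑ a, π (t+1) s a
            = (∑ a, π t s a * Real.exp (Q t s a / τ)) / (∑ b, π t s b * Real.exp (Q t s b / τ)) := by
          rw [Finset.sum_div]
          exact Finset.sum_congr rfl fun a _ => hrec t s a
        rw [this]
        exact div_self (ne_of_gt (hZ0 s))
  have hQB : ∀ t s a, 0 ≤ Q t s a ∧ Q t s a ≤ M := fun t => hQb t (hprob t)
  -- swap lemma
  have swaplemma : ∀ (u w : ℕ) (s : S), (∑ a, π u s a * Q w s a)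
      = (∑ a, π u s a * r s a) + γ * ∑ s', (∑ a, π u s a * P s a s') * v w s' := by
    intro u w s
    calc (∑ a, π u s a * Q w s a)
        = ∑ a, (π u s a * r s a + γ * ∑ s', (π u s a * P s a s') * v w s') := by
          refine Finset.sum_congr rfl fun a _ => ?_
          rw [hQ w s a, mul_add]
          congr 1
          rw [show π u s a * (γ * ∑ s', P s a s' * v w s')
            = γ * (π u s a * ∑ s', P s a s' * v w s') by ring, Finset.mul_sum]
          congr 1
          exact Finset.sum_congr rfl fun s' _ => by ring
      _ = (∑ a, π u s a * r s a) + γ * ∑ a, ∑ s', (π u s a * P s a s') * v w s' := by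
          rw [Finset.sum_add_distrib, ← Finset.mul_sum]
      _ = (∑ a, π u s a * r s a) + γ * ∑ s', (∑ a, π u s a * P s a s') * v w s' := by
          have hsw : (∑ a : A, ∑ s', (π u s a * P s a s') * v w s')
              = ∑ s', (∑ a : A, π u s a * P s a s') * v w s' := by
            rw [Finset.sum_comm]
            refine Finset.sum_congr rfl fun s' _ => ?_
            rw [Finset.sum_mul]
          rw [hsw]
  have hvQ : ∀ t s, v t s = ∑ a, π t s a * Q t s a := fun t s =>
    (hv t s).trans (swaplemma t t s).symm
  -- monotonicity of value functions
  have hmono : ∀ t s, v t s ≤ v (t + 1) s := by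
    intro t s0
    have hp0 : ∀ s s', 0 ≤ ∑ a, π (t+1) s a * P s a s' := fun s s' =>
      Finset.sum_nonneg fun a _ => mul_nonneg ((hprob (t+1)).1 s a) (hP0 s a s')
    have hp1 : ∀ s : S, ∑ s', ∑ a, π (t+1) s a * P s a s' = 1 := by
      intro s
      rw [Finset.sum_comm]
      calc ∑ a : A, ∑ s', π (t+1) s a * P s a s'
          = ∑ a : A, π (t+1) s a * ∑ s', P s a s' :=
            Finset.sum_congr rfl fun a _ => (Finset.mul_sum _ _ _).symm
        _ = 1 := by
            rw [show (∑ a : A, π (t+1) s a * ∑ s', P s a s') = ∑ a : A, π (t+1) s a from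
              Finset.sum_congr rfl fun a _ => by rw [hP1 s a, mul_one]]
            exact (hprob (t+1)).2 s
    have hw : ∀ s, v (t+1) s - v t s
        = ((∑ a, π (t+1) s a * Q t s a) - v t s)
          + γ * ∑ s', (∑ a, π (t+1) s a * P s a s') * (v (t+1) s' - v t s') := by
      intro s
      have h1 := hv (t+1) s
      have h2 := swaplemma (t+1) t s
      have h3 : (∑ s', (∑ a, π (t+1) s a * P s a s') * (v (t+1) s' - v t s'))
          = (∑ s', (∑ a, π (t+1) s a * P s a s') * v (t+1) s')
            - ∑ s', (∑ a, π (t+1) s a * P s a s') * v t s' := by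
        rw [← Finset.sum_sub_distrib]
        exact Finset.sum_congr rfl fun s' _ => by ring
      rw [h3]
      linear_combination h1 - h2
    have hc0 : ∀ s, 0 ≤ (∑ a, π (t+1) s a * Q t s a) - v t s := by
      intro s
      have hZ1 : 1 ≤ ∑ b, π t s b * Real.exp (Q t s b / τ) := by
        calc (1:ℝ) = ∑ b, π t s b := ((hprob t).2 s).symm
        _ ≤ _ := Finset.sum_le_sum fun b _ =>
            le_mul_of_one_le_right ((hprob t).1 s b)
              (Real.one_le_exp (div_nonneg (hQB t s b).1 hτpos.le))
      have hZ0 : (0:ℝ) < ∑ b, π t s b * Real.exp (Q t s b / τ) :=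
        lt_of_lt_of_le one_pos hZ1
      have hcheb := aux_chebyshev (π t s) (Q t s) (fun a => Real.exp (Q t s a / τ))
        ((hprob t).1 s) ((hprob t).2 s)
        (by
          intro a b
          rcases le_total (Q t s a) (Q t s b) with h | h
          · have : Real.exp (Q t s a / τ) ≤ Real.exp (Q t s b / τ) :=
              Real.exp_le_exp.mpr (div_le_div_of_nonneg_right h hτpos.le)
            nlinarith
          · have : Real.exp (Q t s b / τ) ≤ Real.exp (Q t s a / τ) :=
              Real.exp_le_exp.mpr (div_le_div_of_nonneg_right h hτpos.le)
            nlinarith)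
      have hform : (∑ a, π (t+1) s a * Q t s a)
          = (∑ a, π t s a * (Q t s a * Real.exp (Q t s a / τ)))
            / (∑ b, π t s b * Real.exp (Q t s b / τ)) := by
        rw [Finset.sum_div]
        refine Finset.sum_congr rfl fun a _ => ?_
        rw [hrec t s a]
        ring
      have : (∑ a, π t s a * Q t s a) ≤ (∑ a, π (t+1) s a * Q t s a) := by
        rw [hform, le_div_iff₀ hZ0]
        exact hcheb
      rw [hvQ t s]
      linarith
    have := aux_fp_nonneg (fun s s' => ∑ a, π (t+1) s a * P s a s') hp0 hp1 γ hγ0 hγ1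
      (fun s => (∑ a, π (t+1) s a * Q t s a) - v t s)
      (fun s => v (t+1) s - v t s) hw hc0 s0
    linarith
  have hmon2 : ∀ s, Monotone fun t => v t s := fun s =>
    monotone_nat_of_le_succ fun t => hmono t s
  -- optimal action
  have hopt : ∀ s', ∃ a, vstar s' = r s' a + γ * ∑ s'', P s' a s'' * vstar s'' := by
    intro s'
    obtain ⟨a, -, ha⟩ := Finset.exists_mem_eq_sup' Finset.univ_nonempty
      (fun a => r s' a + γ * ∑ s'', P s' a s'' * vstar s'')
    exact ⟨a, (hvstar s').trans ha⟩
  choose astar hastar using hopt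
  -- regret bound per state
  have hreg : ∀ s', ∑ t ∈ Finset.range k, Q t s' (astar s')
      ≤ (∑ t ∈ Finset.range k, ∑ a, π t s' a * Q t s' a)
        + τ * L + k * (M ^ 2 / (2 * τ)) := fun s' =>
    aux_regret τ hτpos M (fun t a => π t s' a) (fun t a => Q t s' a)
      (h0 s') (fun t a => hQB t s' a) (fun t a => hrec t s' a) k (astar s')
  set m : ℝ := (τ * L + k * (M ^ 2 / (2 * τ))) / k with hmdef
  set u : S → ℝ := fun s' => (∑ t ∈ Finset.range k, (vstar s' - v t s')) / k with hudef
  set c : S → ℝ := fun s' =>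
    (∑ t ∈ Finset.range k, (Q t s' (astar s') - v t s')) / k with hcdef
  have hcle : ∀ s', c s' ≤ m := by
    intro s'
    rw [hcdef, hmdef]
    apply div_le_div_of_nonneg_right _ hkpos.le
    have hss : (∑ t ∈ Finset.range k, (Q t s' (astar s') - v t s'))
        = (∑ t ∈ Finset.range k, Q t s' (astar s'))
          - ∑ t ∈ Finset.range k, v t s' := Finset.sum_sub_distrib _ _
    have hvv : (∑ t ∈ Finset.range k, v t s')
        = ∑ t ∈ Finset.range k, ∑ a, π t s' a * Q t s' a :=
      Finset.sum_congr rfl fun t _ => hvQ t s'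
    rw [hss, hvv]
    linarith [hreg s']
  -- recursion for u
  have pert : ∀ t s', vstar s' - v t s' = (Q t s' (astar s') - v t s')
      + γ * ∑ s'', P s' (astar s') s'' * (vstar s'' - v t s'') := by
    intro t s'
    have h1 := hastar s'
    have h2 := hQ t s' (astar s')
    have h3 : (∑ s'', P s' (astar s') s'' * (vstar s'' - v t s''))
        = (∑ s'', P s' (astar s') s'' * vstar s'')
          - ∑ s'', P s' (astar s') s'' * v t s'' := by
      rw [← Finset.sum_sub_distrib]
      exact Finset.sum_congr rfl fun s'' _ => by ring
    rw [h3]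
    linear_combination h1 - h2
  have hwu : ∀ s', u s' = c s' + γ * ∑ s'', P s' (astar s') s'' * u s'' := by
    intro s'
    have hs : (∑ t ∈ Finset.range k, (vstar s' - v t s'))
        = (∑ t ∈ Finset.range k, (Q t s' (astar s') - v t s'))
          + γ * ∑ s'', P s' (astar s') s''
            * ∑ t ∈ Finset.range k, (vstar s'' - v t s'') := by
      rw [Finset.sum_congr rfl fun t _ => pert t s', Finset.sum_add_distrib,
        ← Finset.mul_sum, Finset.sum_comm]
      congr 2
      exact Finset.sum_congr rfl fun s'' _ => (Finset.mul_sum _ _ _).symm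
    simp only [hudef, hcdef]
    rw [hs, add_div]
    congr 1
    rw [mul_div_assoc, Finset.sum_div]
    congr 1
    exact Finset.sum_congr rfl fun s'' _ => (mul_div_assoc _ _ _)
  have hfinub : ∀ s', u s' ≤ m / (1 - γ) :=
    aux_fp_le (fun s' s'' => P s' (astar s') s'') (fun s' s'' => hP0 s' (astar s') s'')
      (fun s' => hP1 s' (astar s')) γ hγ0 hγ1 c u hwu m hcle
  -- final numeric computation
  intro s
  have h1 : vstar s - v (k - 1) s ≤ u s := by
    have hlast : ∀ t ∈ Finset.range k, vstar s - v (k-1) s ≤ vstar s - v t s := by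
      intro t ht
      have ht' : t ≤ k - 1 := by
        have := Finset.mem_range.mp ht; omega
      have := hmon2 s ht'
      linarith
    have hsum : (k:ℝ) * (vstar s - v (k-1) s)
        ≤ ∑ t ∈ Finset.range k, (vstar s - v t s) := by
      calc (k:ℝ) * (vstar s - v (k-1) s)
          = ∑ _t ∈ Finset.range k, (vstar s - v (k-1) s) := by
            rw [Finset.sum_const, Finset.card_range, nsmul_eq_mul]
        _ ≤ _ := Finset.sum_le_sum hlast
    simp only [hudef]
    rw [le_div_iff₀ hkpos]
    linarith
  have h2 : u s ≤ m / (1 - γ) := hfinub s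
  set x : ℝ := Real.sqrt (2 * L / k) with hxdef
  have hxpos : 0 < x := Real.sqrt_pos.mpr (by positivity)
  have hx2 : x ^ 2 = 2 * L / k := Real.sq_sqrt (by positivity)
  have hτ3 : τ = 1 / ((1 - γ) * x) := by
    rw [hτ, hMdef, show (k:ℝ) / (2 * L) = (2 * L / (k:ℝ))⁻¹ by
      rw [inv_div], Real.sqrt_inv, ← hxdef, one_div, one_div, mul_inv]
  have hfin : m / (1 - γ) = (1 / (1 - γ) ^ 2) * x := by
    have hL2 : L = x ^ 2 * k / 2 := by rw [hx2]; field_simp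
    rw [hmdef, hτ3, hMdef, hL2]
    field_simp
    ring
  calc vstar s - v (k - 1) s ≤ u s := h1
    _ ≤ m / (1 - γ) := h2
    _ = (1 / (1 - γ) ^ 2) * x := hfin
end
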